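/- arXiv:2102.00810 — 12 statements merged into one kernel-verified Lean document; each statement's English description precedes it below -/
import Mathlib

section
/- For every x, y ∈ ℱ, every L ≥ L_F and every τ > 0, one has f₁(y) ≤ ψ_{x,L,τ}(y), i.e. ‖F̂(y)‖ ≤ τ/2 + ‖F̂(x) + F̂'(x)(y − x)‖²/(2τ) + (L/2)·‖y − x‖². (Lemma 1: the local model is an upper bound on the residual norm.) -/
/-! Along the segment `t ↦ x + t • (y - x)` the linearization error of `F` has derivative
`(F' (x + t • (y - x)) - F' x) (y - x)`, of norm at most `L_F t ‖y - x‖²`; integrating this from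
`0` to `1` bounds the error by `(L_F / 2) ‖y - x‖²`. The triangle inequality then gives
`‖F y‖ ≤ ‖F x + F' x (y - x)‖ + (L_F / 2) ‖y - x‖²`, and AM-GM, `a ≤ τ / 2 + a² / (2τ)`,
finishes. -/

open Set

theorem le_half_add_sq_div_two_mul {a τ : ℝ} (hτ : 0 < τ) : a ≤ τ / 2 + a ^ 2 / (2 * τ) := by
  have hsq : τ / 2 + a ^ 2 / (2 * τ) - a = (a - τ) ^ 2 / (2 * τ) := by
    field_simp
    ring
  linarith [show 0 ≤ (a - τ) ^ 2 / (2 * τ) by positivity]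

theorem norm_image_one_le_of_norm_deriv_le_mul {E : Type*} [NormedAddCommGroup E]
    [NormedSpace ℝ E] {g g' : ℝ → E} {C : ℝ} (hg : ∀ t ∈ Icc (0 : ℝ) 1, HasDerivAt g (g' t) t)
    (h0 : g 0 = 0) (bound : ∀ t ∈ Ico (0 : ℝ) 1, ‖g' t‖ ≤ C * t) : ‖g 1‖ ≤ C / 2 := by
  have hB : ∀ t : ℝ, HasDerivAt (fun t => C / 2 * t ^ 2) (C * t) t := fun t =>
    ((hasDerivAt_pow 2 t).const_mul (C / 2)).congr_deriv (by ring)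
  simpa using image_norm_le_of_norm_deriv_right_le_deriv_boundary
    (fun t ht => (hg t ht).continuousAt.continuousWithinAt)
    (fun t ht => (hg t (Ico_subset_Icc_self ht)).hasDerivWithinAt)
    (by simp [h0]) hB bound (right_mem_Icc.2 zero_le_one)

theorem Convex.norm_sub_linearization_le_of_lipschitz_fderiv {E F : Type*}
    [NormedAddCommGroup E] [NormedSpace ℝ E] [NormedAddCommGroup F] [NormedSpace ℝ F]
    {f : E → F} {f' : E → E →L[ℝ] F} {s : Set E} (hs : Convex ℝ s)
    (hf : ∀ z ∈ s, HasFDerivAt f (f' z) z) {K : ℝ} {x y : E} (hx : x ∈ s) (hy : y ∈ s)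
    (hLip : ∀ z ∈ s, ‖f' z - f' x‖ ≤ K * ‖z - x‖) :
    ‖f y - (f x + f' x (y - x))‖ ≤ K / 2 * ‖y - x‖ ^ 2 := by
  set v := y - x
  have hmem : ∀ t ∈ Icc (0 : ℝ) 1, x + t • v ∈ s := fun t ht => hs.add_smul_sub_mem hx hy ht
  have hderiv : ∀ t ∈ Icc (0 : ℝ) 1, HasDerivAt (fun t : ℝ => f (x + t • v) - f x - t • f' x v)
      (f' (x + t • v) v - f' x v) t := fun t ht => by
    have hline : HasDerivAt (fun t : ℝ => x + t • v) v t := by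
      simpa using ((hasDerivAt_id t).smul_const v).const_add x
    exact (((hf _ (hmem t ht)).comp_hasDerivAt t hline).sub_const (f x)).sub
      (by simpa using (hasDerivAt_id t).smul_const (f' x v))
  have hbound : ∀ t ∈ Ico (0 : ℝ) 1, ‖f' (x + t • v) v - f' x v‖ ≤ K * ‖v‖ ^ 2 * t := by
    intro t ht
    have hdist : ‖x + t • v - x‖ = t * ‖v‖ := by
      rw [add_sub_cancel_left, norm_smul, Real.norm_of_nonneg ht.1]
    calc ‖f' (x + t • v) v - f' x v‖ ≤ ‖f' (x + t • v) - f' x‖ * ‖v‖ :=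
          (f' (x + t • v) - f' x).le_opNorm v
      _ ≤ K * (t * ‖v‖) * ‖v‖ := by
          gcongr
          exact hdist ▸ hLip _ (hmem t (Ico_subset_Icc_self ht))
      _ = K * ‖v‖ ^ 2 * t := by ring
  have herr := norm_image_one_le_of_norm_deriv_le_mul hderiv (by simp) hbound
  have hend : f (x + (1 : ℝ) • v) - f x - (1 : ℝ) • f' x v = f y - (f x + f' x v) := by
    simp only [one_smul, v, add_sub_cancel]
    abel
  rw [hend] at herr
  linarith

theorem local_model_upper_bound_general
    {n m : ℕ}
    (F : EuclideanSpace ℝ (Fin n) → EuclideanSpace ℝ (Fin m))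
    (F' : EuclideanSpace ℝ (Fin n) →
      EuclideanSpace ℝ (Fin n) →L[ℝ] EuclideanSpace ℝ (Fin m))
    (hF : ∀ x, HasFDerivAt F (F' x) x)
    (𝓕 : Set (EuclideanSpace ℝ (Fin n)))
    (h𝓕conv : Convex ℝ 𝓕)
    (LF : ℝ)
    (hLip : ∀ x ∈ 𝓕, ∀ y ∈ 𝓕, ‖F' y - F' x‖ ≤ LF * ‖y - x‖)
    (x : EuclideanSpace ℝ (Fin n)) (hx : x ∈ 𝓕)
    (y : EuclideanSpace ℝ (Fin n)) (hy : y ∈ 𝓕)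
    (L τ : ℝ) (hL : LF ≤ L) (hτ : 0 < τ) :
    ‖F y‖ ≤ τ / 2 + ‖F x + F' x (y - x)‖ ^ 2 / (2 * τ) + L / 2 * ‖y - x‖ ^ 2 := by
  have htaylor : ‖F y - (F x + F' x (y - x))‖ ≤ LF / 2 * ‖y - x‖ ^ 2 :=
    h𝓕conv.norm_sub_linearization_le_of_lipschitz_fderiv (fun z _ => hF z) hx hy (hLip x hx)
  have htriangle : ‖F y‖ ≤ ‖F x + F' x (y - x)‖ + ‖F y - (F x + F' x (y - x))‖ :=
    norm_le_insert' _ _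
  have hAMGM := le_half_add_sq_div_two_mul (a := ‖F x + F' x (y - x)‖) hτ
  have hL' : LF / 2 * ‖y - x‖ ^ 2 ≤ L / 2 * ‖y - x‖ ^ 2 := by gcongr
  linarith

/-- **Lemma 1.** For every `x, y ∈ 𝓕`, every `L ≥ L_F` and every `τ > 0`, the regularized
local model `ψ_{x,L,τ}` is an upper bound on the residual norm:
`‖F̂(y)‖ ≤ τ/2 + ‖F̂(x) + F̂'(x)(y − x)‖²/(2τ) + (L/2)‖y − x‖²`. -/
theorem local_model_upper_bound
    {n m : ℕ}
    (F : EuclideanSpace ℝ (Fin n) → EuclideanSpace ℝ (Fin m))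
    (F' : EuclideanSpace ℝ (Fin n) →
      EuclideanSpace ℝ (Fin n) →L[ℝ] EuclideanSpace ℝ (Fin m))
    (hF : ∀ x, HasFDerivAt F (F' x) x)
    (𝓕 : Set (EuclideanSpace ℝ (Fin n)))
    (h𝓕closed : IsClosed 𝓕) (h𝓕conv : Convex ℝ 𝓕)
    (LF : ℝ) (hLF : 0 < LF)
    (hLip : ∀ x ∈ 𝓕, ∀ y ∈ 𝓕, ‖F' y - F' x‖ ≤ LF * ‖y - x‖)
    (x : EuclideanSpace ℝ (Fin n)) (hx : x ∈ 𝓕)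
    (y : EuclideanSpace ℝ (Fin n)) (hy : y ∈ 𝓕)
    (L τ : ℝ) (hL : LF ≤ L) (hτ : 0 < τ) :
    ‖F y‖ ≤ τ / 2 + ‖F x + F' x (y - x)‖ ^ 2 / (2 * τ) + L / 2 * ‖y - x‖ ^ 2 :=
  local_model_upper_bound_general F F' hF 𝓕 h𝓕conv LF hLip x hx y hy L τ hL hτ
end

section
/- Let τ > 0 and L ≥ L_F, and suppose x ∈ ℱ and T_{L,τ}(x) ∈ ℱ. Then τ/2 + f₂(x)/(2τ) − f₁(T_{L,τ}(x)) ≥ (L/2)·‖T_{L,τ}(x) − x‖². (Lemma 2: decrease of the residual measured by the proximal step length.) -/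
/-!
Write `r = F x + F' x (T - x)` for the linearized residual at the proximal point. Three estimates
chain together:
* Taylor's bound with an `LF`-Lipschitz derivative gives `‖F T‖ ≤ ‖r‖ + LF/2 ‖T - x‖²`;
* AM-GM gives `‖r‖ ≤ τ/2 + ‖r‖²/(2τ)`;
* `y ↦ ψ(y) - τ/2` is a quadratic `‖F x + F' x (y - x)‖²/(2τ) + L/2 ‖y - x‖²` whose Hessian
  dominates `L`, so comparing its minimizer `T` with `y = x` gives
  `‖r‖²/(2τ) + L ‖T - x‖² ≤ ‖F x‖²/(2τ)`.
-/

/-- The regularized local model `ψ_{x,L,τ}(y)`. -/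
noncomputable def psi {n m : ℕ}
    (F : EuclideanSpace ℝ (Fin n) → EuclideanSpace ℝ (Fin m))
    (F' : EuclideanSpace ℝ (Fin n) →
      EuclideanSpace ℝ (Fin n) →L[ℝ] EuclideanSpace ℝ (Fin m))
    (x : EuclideanSpace ℝ (Fin n)) (L τ : ℝ) (y : EuclideanSpace ℝ (Fin n)) : ℝ :=
  τ / 2 + ‖F x + F' x (y - x)‖ ^ 2 / (2 * τ) + L / 2 * ‖y - x‖ ^ 2

open Set

theorem norm_sub_le_half_of_norm_deriv_le_mul {E : Type*} [NormedAddCommGroup E]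
    [NormedSpace ℝ E] {g g' : ℝ → E} {C : ℝ} (hg : ∀ t ∈ Icc (0 : ℝ) 1, HasDerivAt g (g' t) t)
    (hbound : ∀ t ∈ Ico (0 : ℝ) 1, ‖g' t‖ ≤ C * t) :
    ‖g 1 - g 0‖ ≤ C / 2 := by
  have hB : ∀ t : ℝ, HasDerivAt (fun s => C / 2 * s ^ 2) (C * t) t := fun t =>
    ((hasDerivAt_pow 2 t).const_mul (C / 2)).congr_deriv (by norm_num; ring)
  have := image_norm_le_of_norm_deriv_right_le_deriv_boundary (f := fun t => g t - g 0)
    (fun t ht => ((hg t ht).sub_const (g 0)).continuousAt.continuousWithinAt)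
    (fun t ht => ((hg t (Ico_subset_Icc_self ht)).sub_const (g 0)).hasDerivWithinAt)
    (by simp) hB hbound (right_mem_Icc.2 zero_le_one)
  simpa using this

theorem Convex.norm_image_sub_sub_fderiv_le {E F : Type*} [NormedAddCommGroup E]
    [NormedSpace ℝ E] [NormedAddCommGroup F] [NormedSpace ℝ F] {f : E → F} {f' : E → E →L[ℝ] F}
    {s : Set E} (hs : Convex ℝ s) (hf : ∀ z ∈ s, HasFDerivAt f (f' z) z) {x y : E}
    (hx : x ∈ s) (hy : y ∈ s) {K : ℝ} (hLip : ∀ z ∈ s, ‖f' z - f' x‖ ≤ K * ‖z - x‖) :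
    ‖f y - f x - f' x (y - x)‖ ≤ K / 2 * ‖y - x‖ ^ 2 := by
  set v := y - x
  have hseg : ∀ t ∈ Icc (0 : ℝ) 1, x + t • v ∈ s := fun t ht => by
    simpa [v, smul_sub, sub_smul, add_sub, add_comm] using
      hs hx hy (sub_nonneg.2 ht.2) ht.1 (sub_add_cancel 1 t)
  have hg : ∀ t ∈ Icc (0 : ℝ) 1, HasDerivAt (fun t => f (x + t • v) - t • f' x v)
      (f' (x + t • v) v - f' x v) t := fun t ht => by
    have hline : HasDerivAt (fun t : ℝ => x + t • v) v t := by
      simpa using ((hasDerivAt_id t).smul_const v).const_add x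
    exact ((hf _ (hseg t ht)).comp_hasDerivAt t hline).sub
      (by simpa using (hasDerivAt_id t).smul_const (f' x v))
  have hbound : ∀ t ∈ Ico (0 : ℝ) 1, ‖f' (x + t • v) v - f' x v‖ ≤ K * ‖v‖ ^ 2 * t :=
    fun t ht => calc
      ‖f' (x + t • v) v - f' x v‖ ≤ ‖f' (x + t • v) - f' x‖ * ‖v‖ :=
        (f' (x + t • v) - f' x).le_opNorm v
      _ ≤ K * ‖x + t • v - x‖ * ‖v‖ :=
        mul_le_mul_of_nonneg_right (hLip _ (hseg t (Ico_subset_Icc_self ht))) (norm_nonneg v)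
      _ = K * ‖v‖ ^ 2 * t := by
        rw [add_sub_cancel_left, norm_smul, Real.norm_of_nonneg ht.1]; ring
  have := norm_sub_le_half_of_norm_deriv_le_mul hg hbound
  simp only [one_smul, zero_smul, add_zero, sub_zero] at this
  calc ‖f y - f x - f' x v‖ = ‖f (x + v) - f' x v - f x‖ := by simp [v, sub_right_comm]
    _ ≤ K / 2 * ‖v‖ ^ 2 := by linarith

section RegularizedLeastSquares

variable {E F : Type*} [NormedAddCommGroup E] [InnerProductSpace ℝ E] [NormedAddCommGroup F]
  [InnerProductSpace ℝ F] (A : E →L[ℝ] F) (u : F) (τ L : ℝ)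

open scoped RealInnerProductSpace

noncomputable def regLeastSquares (z : E) : ℝ := ‖u + A z‖ ^ 2 / (2 * τ) + L / 2 * ‖z‖ ^ 2

theorem regLeastSquares_add (z w : E) :
    regLeastSquares A u τ L (z + w) = regLeastSquares A u τ L z
      + (⟪u + A z, A w⟫ / τ + L * ⟪z, w⟫) + (‖A w‖ ^ 2 / (2 * τ) + L / 2 * ‖w‖ ^ 2) := by
  simp only [regLeastSquares, map_add, ← add_assoc, norm_add_sq_real (u + A z)]
  rw [norm_add_sq_real z]
  ring

variable {τ} in
theorem regLeastSquares_add_le_of_forall_le (hτ : 0 < τ) {z₀ : E}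
    (hmin : ∀ z, regLeastSquares A u τ L z₀ ≤ regLeastSquares A u τ L z) (z : E) :
    regLeastSquares A u τ L z₀ + L / 2 * ‖z - z₀‖ ^ 2 ≤ regLeastSquares A u τ L z := by
  set w := z - z₀
  set g := ⟪u + A z₀, A w⟫ / τ + L * ⟪z₀, w⟫
  set h := ‖A w‖ ^ 2 / (2 * τ) + L / 2 * ‖w‖ ^ 2
  have hline : ∀ t : ℝ, regLeastSquares A u τ L (z₀ + t • w) =
      regLeastSquares A u τ L z₀ + g * t + h * (t * t) := fun t => by
    rw [regLeastSquares_add]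
    simp only [map_smul, inner_smul_right, norm_smul, mul_pow, Real.norm_eq_abs, sq_abs, g, h]
    ring
  -- `t ↦ g t + h t²` is minimal at `t = 0`, so its linear coefficient vanishes
  have hg : g = 0 := by
    have := discrim_le_zero (a := h) (b := g) (c := 0) fun t : ℝ => by
      linarith [hline t, hmin (z₀ + t • w)]
    rw [discrim] at this
    nlinarith [sq_nonneg g]
  have hz := hline 1
  rw [one_smul, add_sub_cancel, hg] at hz
  have : 0 ≤ ‖A w‖ ^ 2 / (2 * τ) := by positivity
  simp only [hz, h]
  linarith

end RegularizedLeastSquares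

theorem psi_eq_regLeastSquares {n m : ℕ}
    (F : EuclideanSpace ℝ (Fin n) → EuclideanSpace ℝ (Fin m))
    (F' : EuclideanSpace ℝ (Fin n) →
      EuclideanSpace ℝ (Fin n) →L[ℝ] EuclideanSpace ℝ (Fin m))
    (x : EuclideanSpace ℝ (Fin n)) (L τ : ℝ) (y : EuclideanSpace ℝ (Fin n)) :
    psi F F' x L τ y = τ / 2 + regLeastSquares (F' x) (F x) τ L (y - x) := by
  rw [psi, regLeastSquares, add_assoc]

theorem decrease_by_prox_step_length_general
    {n m : ℕ}
    (F : EuclideanSpace ℝ (Fin n) → EuclideanSpace ℝ (Fin m))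
    (F' : EuclideanSpace ℝ (Fin n) →
      EuclideanSpace ℝ (Fin n) →L[ℝ] EuclideanSpace ℝ (Fin m))
    (hF : ∀ x, HasFDerivAt F (F' x) x)
    (𝓕 : Set (EuclideanSpace ℝ (Fin n)))
    (h𝓕conv : Convex ℝ 𝓕)
    (LF : ℝ)
    (hLip : ∀ x ∈ 𝓕, ∀ y ∈ 𝓕, ‖F' y - F' x‖ ≤ LF * ‖y - x‖)
    (x : EuclideanSpace ℝ (Fin n)) (hx : x ∈ 𝓕)
    (L τ : ℝ) (hτ : 0 < τ) (hL : LF ≤ L)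
    (T : EuclideanSpace ℝ (Fin n))
    (hTmin : ∀ y, psi F F' x L τ T ≤ psi F F' x L τ y)
    (hT : T ∈ 𝓕) :
    L / 2 * ‖T - x‖ ^ 2 ≤ τ / 2 + ‖F x‖ ^ 2 / (2 * τ) - ‖F T‖ := by
  set r := F x + F' x (T - x)
  have htaylor : ‖F T - r‖ ≤ LF / 2 * ‖T - x‖ ^ 2 := by
    simpa [r, sub_add_eq_sub_sub] using
      h𝓕conv.norm_image_sub_sub_fderiv_le (fun z _ => hF z) hx hT (hLip x hx)
  have hmodel := regLeastSquares_add_le_of_forall_le (F' x) (F x) L hτ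
    (z₀ := T - x) (fun z => by simpa [psi_eq_regLeastSquares] using hTmin (x + z)) 0
  simp only [regLeastSquares, map_zero, add_zero, norm_zero, zero_sub, norm_neg] at hmodel
  have hamgm : ‖r‖ ≤ τ / 2 + ‖r‖ ^ 2 / (2 * τ) := by
    rw [← sub_nonneg]
    have : τ / 2 + ‖r‖ ^ 2 / (2 * τ) - ‖r‖ = (‖r‖ - τ) ^ 2 / (2 * τ) := by field_simp; ring
    rw [this]; positivity
  have hLF : LF / 2 * ‖T - x‖ ^ 2 ≤ L / 2 * ‖T - x‖ ^ 2 := by gcongr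
  linarith [norm_le_norm_add_norm_sub' (F T) r]

/-- **Lemma 2.** Decrease of the residual measured by the proximal step length:
`τ/2 + f₂(x)/(2τ) − f₁(T_{L,τ}(x)) ≥ (L/2)‖T_{L,τ}(x) − x‖²`, where `T_{L,τ}(x)`
is the (unique) minimizer of `ψ_{x,L,τ}` over `E₁`. -/
theorem decrease_by_prox_step_length
    {n m : ℕ}
    (F : EuclideanSpace ℝ (Fin n) → EuclideanSpace ℝ (Fin m))
    (F' : EuclideanSpace ℝ (Fin n) →
      EuclideanSpace ℝ (Fin n) →L[ℝ] EuclideanSpace ℝ (Fin m))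
    (hF : ∀ x, HasFDerivAt F (F' x) x)
    (𝓕 : Set (EuclideanSpace ℝ (Fin n)))
    (h𝓕closed : IsClosed 𝓕) (h𝓕conv : Convex ℝ 𝓕)
    (LF : ℝ) (hLF : 0 < LF)
    (hLip : ∀ x ∈ 𝓕, ∀ y ∈ 𝓕, ‖F' y - F' x‖ ≤ LF * ‖y - x‖)
    (x : EuclideanSpace ℝ (Fin n)) (hx : x ∈ 𝓕)
    (L τ : ℝ) (hτ : 0 < τ) (hL : LF ≤ L)
    (T : EuclideanSpace ℝ (Fin n))
    (hTmin : ∀ y, psi F F' x L τ T ≤ psi F F' x L τ y)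
    (hT : T ∈ 𝓕) :
    L / 2 * ‖T - x‖ ^ 2 ≤ τ / 2 + ‖F x‖ ^ 2 / (2 * τ) - ‖F T‖ :=
  decrease_by_prox_step_length_general F F' hF 𝓕 h𝓕conv LF hLip x hx L τ hτ hL T hTmin hT
end

section
/- Let L > 0, τ > 0, and suppose x ∈ ℱ and T_{L,τ}(x) ∈ ℱ. Then for every y ∈ ℱ, ψ_{x,L,τ}(T_{L,τ}(x)) ≤ τ/2 + (L/2)·‖y − x‖² + f₂(y)/(2τ) + f₁(y)·L_F·‖y − x‖²/(2τ) + L_F²·‖y − x‖⁴/(8τ). (Lemma 4: upper bound on the minimal value of the local model.) -/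
theorem Convex.norm_sub_sub_fderiv_le_of_norm_fderiv_sub_le
    {E G : Type*} [NormedAddCommGroup E] [NormedSpace ℝ E]
    [NormedAddCommGroup G] [NormedSpace ℝ G]
    {f : E → G} {f' : E → E →L[ℝ] G} {s : Set E} {x y : E} {C : ℝ}
    (hs : Convex ℝ s) (hx : x ∈ s) (hy : y ∈ s)
    (hf : ∀ z ∈ s, HasFDerivAt f (f' z) z)
    (hf' : ∀ z ∈ s, ‖f' z - f' x‖ ≤ C * ‖z - x‖) :
    ‖f y - f x - f' x (y - x)‖ ≤ C / 2 * ‖y - x‖ ^ 2 := by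
  set v := y - x
  have hseg : ∀ t ∈ Set.Icc (0 : ℝ) 1, x + t • v ∈ s := fun t ht =>
    hs.add_smul_sub_mem hx hy ht
  set g : ℝ → G := fun t => f (x + t • v) - f x - t • f' x v
  have hg : ∀ t ∈ Set.Icc (0 : ℝ) 1, HasDerivAt g (f' (x + t • v) v - f' x v) t := by
    intro t ht
    have hpath : HasDerivAt (fun s : ℝ => x + s • v) v t := by
      simpa using ((hasDerivAt_id t).smul_const v).const_add x
    have hlin : HasDerivAt (fun s : ℝ => s • f' x v) (f' x v) t := by
      simpa using (hasDerivAt_id t).smul_const (f' x v)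
    exact (((hf _ (hseg t ht)).comp_hasDerivAt t hpath).sub_const (f x)).sub hlin
  have hderiv_le : ∀ t ∈ Set.Ico (0 : ℝ) 1, ‖f' (x + t • v) v - f' x v‖ ≤ C * ‖v‖ ^ 2 * t := by
    intro t ht
    calc ‖f' (x + t • v) v - f' x v‖ = ‖(f' (x + t • v) - f' x) v‖ := rfl
      _ ≤ ‖f' (x + t • v) - f' x‖ * ‖v‖ := ContinuousLinearMap.le_opNorm _ _
      _ ≤ C * ‖(x + t • v) - x‖ * ‖v‖ := by
          gcongr; exact hf' _ (hseg t (Set.Ico_subset_Icc_self ht))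
      _ = C * ‖v‖ ^ 2 * t := by
          rw [add_sub_cancel_left, norm_smul, Real.norm_of_nonneg ht.1]
          ring
  have hB : ∀ t : ℝ, HasDerivAt (fun t => C / 2 * ‖v‖ ^ 2 * t ^ 2) (C * ‖v‖ ^ 2 * t) t := by
    intro t
    refine ((hasDerivAt_pow 2 t).const_mul (C / 2 * ‖v‖ ^ 2)).congr_deriv ?_
    push_cast
    ring
  have key := image_norm_le_of_norm_deriv_right_le_deriv_boundary
    (fun t ht => (hg t ht).continuousAt.continuousWithinAt)
    (fun t ht => (hg t (Set.Ico_subset_Icc_self ht)).hasDerivWithinAt)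
    (by simp [g]) hB hderiv_le (Set.right_mem_Icc.2 zero_le_one)
  simpa [g, v] using key

theorem Convex.norm_linearization_le
    {E G : Type*} [NormedAddCommGroup E] [NormedSpace ℝ E]
    [NormedAddCommGroup G] [NormedSpace ℝ G]
    {f : E → G} {f' : E → E →L[ℝ] G} {s : Set E} {x y : E} {C : ℝ}
    (hs : Convex ℝ s) (hx : x ∈ s) (hy : y ∈ s)
    (hf : ∀ z ∈ s, HasFDerivAt f (f' z) z)
    (hf' : ∀ z ∈ s, ‖f' z - f' x‖ ≤ C * ‖z - x‖) :
    ‖f x + f' x (y - x)‖ ≤ ‖f y‖ + C / 2 * ‖y - x‖ ^ 2 := by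
  have h := hs.norm_sub_sub_fderiv_le_of_norm_fderiv_sub_le hx hy hf hf'
  calc ‖f x + f' x (y - x)‖ = ‖f y - (f y - f x - f' x (y - x))‖ := by congr 1; abel
    _ ≤ ‖f y‖ + ‖f y - f x - f' x (y - x)‖ := norm_sub_le _ _
    _ ≤ ‖f y‖ + C / 2 * ‖y - x‖ ^ 2 := by gcongr

theorem psi_le_of_norm_linearization_le {n m : ℕ}
    {F : EuclideanSpace ℝ (Fin n) → EuclideanSpace ℝ (Fin m)}
    {F' : EuclideanSpace ℝ (Fin n) → EuclideanSpace ℝ (Fin n) →L[ℝ] EuclideanSpace ℝ (Fin m)}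
    {x y : EuclideanSpace ℝ (Fin n)} {L τ C : ℝ} (hτ : 0 < τ)
    (h : ‖F x + F' x (y - x)‖ ≤ ‖F y‖ + C / 2 * ‖y - x‖ ^ 2) :
    psi F F' x L τ y
      ≤ τ / 2 + L / 2 * ‖y - x‖ ^ 2 + ‖F y‖ ^ 2 / (2 * τ)
        + ‖F y‖ * C * ‖y - x‖ ^ 2 / (2 * τ) + C ^ 2 * ‖y - x‖ ^ 4 / (8 * τ) := by
  have hsq : ‖F x + F' x (y - x)‖ ^ 2 ≤ (‖F y‖ + C / 2 * ‖y - x‖ ^ 2) ^ 2 :=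
    pow_le_pow_left₀ (norm_nonneg _) h 2
  have hexpand : (‖F y‖ + C / 2 * ‖y - x‖ ^ 2) ^ 2 / (2 * τ)
      = ‖F y‖ ^ 2 / (2 * τ) + ‖F y‖ * C * ‖y - x‖ ^ 2 / (2 * τ)
        + C ^ 2 * ‖y - x‖ ^ 4 / (8 * τ) := by
    field_simp
    ring
  unfold psi
  linarith [div_le_div_of_nonneg_right hsq (by positivity : (0 : ℝ) ≤ 2 * τ)]

theorem min_local_model_upper_bound_general
    {n m : ℕ}
    (F : EuclideanSpace ℝ (Fin n) → EuclideanSpace ℝ (Fin m))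
    (F' : EuclideanSpace ℝ (Fin n) →
      EuclideanSpace ℝ (Fin n) →L[ℝ] EuclideanSpace ℝ (Fin m))
    (hF : ∀ x, HasFDerivAt F (F' x) x)
    (𝓕 : Set (EuclideanSpace ℝ (Fin n)))
    (h𝓕conv : Convex ℝ 𝓕)
    (LF : ℝ)
    (hLip : ∀ x ∈ 𝓕, ∀ y ∈ 𝓕, ‖F' y - F' x‖ ≤ LF * ‖y - x‖)
    (x : EuclideanSpace ℝ (Fin n)) (hx : x ∈ 𝓕)
    (L τ : ℝ) (hτ : 0 < τ)
    (T : EuclideanSpace ℝ (Fin n))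
    (hTmin : ∀ y, psi F F' x L τ T ≤ psi F F' x L τ y) :
    ∀ y ∈ 𝓕, psi F F' x L τ T
      ≤ τ / 2 + L / 2 * ‖y - x‖ ^ 2 + ‖F y‖ ^ 2 / (2 * τ)
        + ‖F y‖ * LF * ‖y - x‖ ^ 2 / (2 * τ) + LF ^ 2 * ‖y - x‖ ^ 4 / (8 * τ) := by
  intro y hy
  have hlin : ‖F x + F' x (y - x)‖ ≤ ‖F y‖ + LF / 2 * ‖y - x‖ ^ 2 :=
    h𝓕conv.norm_linearization_le hx hy (fun z _ => hF z) (hLip x hx)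
  exact (hTmin y).trans (psi_le_of_norm_linearization_le hτ hlin)

/-- **Lemma 4.** Upper bound on the minimal value of the local model:
for every `y ∈ 𝓕`,
`ψ_{x,L,τ}(T_{L,τ}(x)) ≤ τ/2 + (L/2)‖y−x‖² + f₂(y)/(2τ) + f₁(y)L_F‖y−x‖²/(2τ) + L_F²‖y−x‖⁴/(8τ)`. -/
theorem min_local_model_upper_bound
    {n m : ℕ}
    (F : EuclideanSpace ℝ (Fin n) → EuclideanSpace ℝ (Fin m))
    (F' : EuclideanSpace ℝ (Fin n) →
      EuclideanSpace ℝ (Fin n) →L[ℝ] EuclideanSpace ℝ (Fin m))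
    (hF : ∀ x, HasFDerivAt F (F' x) x)
    (𝓕 : Set (EuclideanSpace ℝ (Fin n)))
    (h𝓕closed : IsClosed 𝓕) (h𝓕conv : Convex ℝ 𝓕)
    (LF : ℝ) (hLF : 0 < LF)
    (hLip : ∀ x ∈ 𝓕, ∀ y ∈ 𝓕, ‖F' y - F' x‖ ≤ LF * ‖y - x‖)
    (x : EuclideanSpace ℝ (Fin n)) (hx : x ∈ 𝓕)
    (L τ : ℝ) (hL : 0 < L) (hτ : 0 < τ)
    (T : EuclideanSpace ℝ (Fin n))
    (hTmin : ∀ y, psi F F' x L τ T ≤ psi F F' x L τ y)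
    (hT : T ∈ 𝓕) :
    ∀ y ∈ 𝓕, psi F F' x L τ T
      ≤ τ / 2 + L / 2 * ‖y - x‖ ^ 2 + ‖F y‖ ^ 2 / (2 * τ)
        + ‖F y‖ * LF * ‖y - x‖ ^ 2 / (2 * τ) + LF ^ 2 * ‖y - x‖ ^ 4 / (8 * τ) :=
  min_local_model_upper_bound_general F F' hF 𝓕 h𝓕conv LF hLip x hx L τ hτ T hTmin
end

section
/- Let m ≤ n be positive integers, μ > 0, and let A be a real m×n matrix such that A·Aᵀ ⪰ μ·I_m in the Loewner order. Then for every ξ > 0 and every t ∈ [0,1], A·(ξ·I_n + Aᵀ·A)^(−t)·Aᵀ ⪰ (μ/(ξ + μ)^t)·I_m, where (ξ·I_n + Aᵀ·A)^(−t) denotes the matrix obtained by applying the function r ↦ r^(−t) to the eigenvalues in a spectral decomposition of the symmetric positive-definite matrix ξ·I_n + Aᵀ·A (Hermitian functional calculus). (Lemma 5.) -/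
open Matrix

/-!
Put `B = A U`, so that `Bᵀ B = diagonal (d - ξ)` and `B Bᵀ = A Aᵀ ⪰ μ I`. As `B Bᵀ` is
invertible, `B (Bᵀ B)⁺ Bᵀ = I`, which turns the claim into the positivity of the diagonal matrix
`d^(-t) - c (d - ξ)⁺` conjugated by `B`. Each `dᵢ - ξ` is either `0` or at least `μ`, and on
`[μ, ∞)` the bound `c ≤ s (ξ + s)^(-t)` is the monotonicity of `s ↦ s / (ξ + s)^t`.
-/

/-- Both factors of `s / (ξ + s) ^ t = s ^ (1 - t) * (s / (ξ + s)) ^ t` are monotone in `s`. -/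
lemma div_rpow_add_le_div_rpow_add {ξ μ s t : ℝ} (hξ : 0 ≤ ξ) (hμ : 0 < μ) (hμs : μ ≤ s)
    (ht0 : 0 ≤ t) (ht1 : t ≤ 1) : μ / (ξ + μ) ^ t ≤ s / (ξ + s) ^ t := by
  have factor : ∀ x : ℝ, 0 < x → x / (ξ + x) ^ t = x ^ (1 - t) * (x / (ξ + x)) ^ t := by
    intro x hx
    rw [Real.div_rpow hx.le (by positivity), Real.rpow_sub hx, Real.rpow_one]
    field_simp
  have hs : 0 < s := hμ.trans_le hμs
  have ratio_le : μ / (ξ + μ) ≤ s / (ξ + s) := by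
    rw [div_le_div_iff₀ (by positivity) (by positivity)]
    nlinarith
  rw [factor μ hμ, factor s hs]
  gcongr

section Gram

variable {m n : Type*} [Fintype m] [DecidableEq n] {B : Matrix m n ℝ} {e : n → ℝ}

lemma nonneg_of_transpose_mul_self_eq_diagonal [Finite n] (hB : Bᵀ * B = diagonal e) (i : n) :
    0 ≤ e i := by
  have h := posSemidef_conjTranspose_mul_self B
  rw [conjTranspose_eq_transpose_of_trivial, hB] at h
  exact posSemidef_diagonal_iff.mp h i

lemma col_eq_zero_of_transpose_mul_self_eq_diagonal (hB : Bᵀ * B = diagonal e) {i : n}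
    (hi : e i = 0) (j : m) : B j i = 0 := by
  have hcol : (fun j => B j i) ⬝ᵥ (fun j => B j i) = 0 := by
    simpa [mul_apply, dotProduct, hi] using congrFun₂ hB i i
  exact congrFun (dotProduct_self_eq_zero.mp hcol) j

/-- Conjugating `B Bᵀ ⪰ μ I` by `B` gives `diagonal (e² - μ e) ⪰ 0`. -/
lemma eq_zero_or_le_of_transpose_mul_self_eq_diagonal [Fintype n] [DecidableEq m] {μ : ℝ}
    (hB : Bᵀ * B = diagonal e) (hμ : (B * Bᵀ - μ • 1).PosSemidef) (i : n) :
    e i = 0 ∨ μ ≤ e i := by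
  have hconj := hμ.mul_mul_conjTranspose_same Bᵀ
  rw [conjTranspose_eq_transpose_of_trivial, transpose_transpose, Matrix.mul_sub,
    Matrix.sub_mul, ← Matrix.mul_assoc Bᵀ B, Matrix.mul_assoc (Bᵀ * B) Bᵀ, hB, Matrix.mul_smul,
    Matrix.mul_one, Matrix.smul_mul, hB, diagonal_mul_diagonal, ← diagonal_smul,
    diagonal_sub, posSemidef_diagonal_iff] at hconj
  have h := hconj i
  simp only [Pi.smul_apply, smul_eq_mul, sub_nonneg] at h
  rcases (nonneg_of_transpose_mul_self_eq_diagonal hB i).eq_or_lt with h0 | h0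
  · exact Or.inl h0.symm
  · exact Or.inr (le_of_mul_le_mul_right (by linarith) h0)

/-- Since `0⁻¹ = 0`, `diagonal e⁻¹` is the pseudo-inverse of `Bᵀ B`. -/
lemma mul_diagonal_inv_mul_transpose_eq_one [Fintype n] [DecidableEq m]
    (hB : Bᵀ * B = diagonal e) (hunit : IsUnit (B * Bᵀ)) :
    B * diagonal e⁻¹ * Bᵀ = 1 := by
  have hproj : B * diagonal (fun i => (e i)⁻¹ * e i) = B := by
    ext j i
    rw [mul_diagonal]
    by_cases hi : e i = 0
    · simp [hi, col_eq_zero_of_transpose_mul_self_eq_diagonal hB hi j]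
    · rw [inv_mul_cancel₀ hi, mul_one]
  rw [← hunit.mul_eq_right, Matrix.mul_assoc, ← Matrix.mul_assoc Bᵀ, hB, ← Matrix.mul_assoc,
    Matrix.mul_assoc B, diagonal_mul_diagonal]
  exact congrArg (· * Bᵀ) hproj

lemma posSemidef_mul_diagonal_mul_transpose_sub_smul_one [Fintype n] [DecidableEq m]
    {μ c : ℝ} {φ : n → ℝ}
    (hB : Bᵀ * B = diagonal e) (hμ0 : 0 < μ) (hμ : (B * Bᵀ - μ • 1).PosSemidef)
    (hφ0 : ∀ i, e i = 0 → 0 ≤ φ i) (hφ : ∀ i, μ ≤ e i → c ≤ e i * φ i) :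
    (B * diagonal φ * Bᵀ - c • 1).PosSemidef := by
  have hunit : IsUnit (B * Bᵀ) := by
    simpa using (PosDef.posSemidef_add hμ (PosDef.one.smul hμ0)).isUnit
  have hentry : ∀ i, 0 ≤ φ i - c * (e i)⁻¹ := by
    intro i
    rcases eq_zero_or_le_of_transpose_mul_self_eq_diagonal hB hμ i with hi | hi
    · simpa [hi] using hφ0 i hi
    · rw [sub_nonneg, ← div_eq_mul_inv, div_le_iff₀ (hμ0.trans_le hi), mul_comm]
      exact hφ i hi
  have hdiff :
      B * diagonal φ * Bᵀ - c • 1 = B * diagonal (fun i => φ i - c * (e i)⁻¹) * Bᵀ := by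
    rw [← mul_diagonal_inv_mul_transpose_eq_one hB hunit, ← Matrix.smul_mul, ← Matrix.mul_smul,
      ← Matrix.sub_mul, ← Matrix.mul_sub, ← diagonal_smul, diagonal_sub]
    rfl
  rw [hdiff]
  simpa [conjTranspose_eq_transpose_of_trivial] using
    (posSemidef_diagonal_iff.mpr hentry).mul_mul_conjTranspose_same B

end Gram

theorem loewner_bound_regularized_power_general
    (m n : ℕ) (μ : ℝ) (hμ : 0 < μ)
    (A : Matrix (Fin m) (Fin n) ℝ)
    (hA : (A * Aᵀ - μ • (1 : Matrix (Fin m) (Fin m) ℝ)).PosSemidef)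
    (ξ : ℝ) (hξ : 0 < ξ) (t : ℝ) (ht : t ∈ Set.Icc (0 : ℝ) 1)
    (U : Matrix (Fin n) (Fin n) ℝ) (hU : Uᵀ * U = 1)
    (d : Fin n → ℝ)
    (hdec : ξ • (1 : Matrix (Fin n) (Fin n) ℝ) + Aᵀ * A = U * Matrix.diagonal d * Uᵀ) :
    (A * (U * Matrix.diagonal (fun i => d i ^ (-t)) * Uᵀ) * Aᵀ
      - (μ / (ξ + μ) ^ t) • (1 : Matrix (Fin m) (Fin m) ℝ)).PosSemidef := by
  have hAtA : Aᵀ * A = U * diagonal d * Uᵀ - ξ • 1 := eq_sub_of_add_eq' hdec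
  have hgram : (A * U)ᵀ * (A * U) = diagonal (fun i => d i - ξ) := calc
    (A * U)ᵀ * (A * U) = Uᵀ * (Aᵀ * A) * U := by simp only [transpose_mul, Matrix.mul_assoc]
    _ = Uᵀ * U * diagonal d * (Uᵀ * U) - ξ • (Uᵀ * U) := by
      simp only [hAtA, Matrix.mul_sub, Matrix.sub_mul, Matrix.mul_assoc, Matrix.mul_smul,
        Matrix.smul_mul, Matrix.mul_one]
    _ = diagonal (fun i => d i - ξ) := by
      rw [hU, Matrix.one_mul, Matrix.mul_one, ← diagonal_one, ← diagonal_smul, diagonal_sub]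
      simp
  have hBBt : (A * U) * (A * U)ᵀ = A * Aᵀ := by
    rw [transpose_mul, Matrix.mul_assoc, ← Matrix.mul_assoc U, mul_eq_one_comm.mp hU,
      Matrix.one_mul]
  have hconj : A * (U * diagonal (fun i => d i ^ (-t)) * Uᵀ) * Aᵀ
      = (A * U) * diagonal (fun i => d i ^ (-t)) * (A * U)ᵀ := by
    simp only [transpose_mul, Matrix.mul_assoc]
  rw [hconj]
  refine posSemidef_mul_diagonal_mul_transpose_sub_smul_one hgram hμ (hBBt ▸ hA) ?_ ?_
  · intro i hi
    exact Real.rpow_nonneg (by linarith [sub_eq_zero.mp hi]) _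
  · intro i hi
    have h := div_rpow_add_le_div_rpow_add hξ.le hμ hi ht.1 ht.2
    rwa [add_sub_cancel, div_eq_mul_inv (d i - ξ), ← Real.rpow_neg (by linarith)] at h

/-- **Lemma 5.** If `A Aᵀ ⪰ μ I_m` then for any `ξ > 0` and `t ∈ [0,1]`,
`A (ξ I_n + Aᵀ A)^(−t) Aᵀ ⪰ (μ/(ξ+μ)^t) I_m`, the power being taken through any
spectral decomposition `ξ I_n + Aᵀ A = U (diagonal d) Uᵀ` with `U` orthogonal and `d > 0`. -/
theorem loewner_bound_regularized_power
    (m n : ℕ) (hm : 0 < m) (hmn : m ≤ n) (μ : ℝ) (hμ : 0 < μ)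
    (A : Matrix (Fin m) (Fin n) ℝ)
    (hA : (A * Aᵀ - μ • (1 : Matrix (Fin m) (Fin m) ℝ)).PosSemidef)
    (ξ : ℝ) (hξ : 0 < ξ) (t : ℝ) (ht : t ∈ Set.Icc (0 : ℝ) 1)
    (U : Matrix (Fin n) (Fin n) ℝ) (hU : Uᵀ * U = 1)
    (d : Fin n → ℝ) (hd : ∀ i, 0 < d i)
    (hdec : ξ • (1 : Matrix (Fin n) (Fin n) ℝ) + Aᵀ * A = U * Matrix.diagonal d * Uᵀ) :
    (A * (U * Matrix.diagonal (fun i => d i ^ (-t)) * Uᵀ) * Aᵀ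
      - (μ / (ξ + μ) ^ t) • (1 : Matrix (Fin m) (Fin m) ℝ)).PosSemidef :=
  loewner_bound_regularized_power_general m n μ hμ A hA ξ hξ t ht U hU d hdec
end

section
/- Let x ∈ ℱ with f₁(x) > 0 and 0 < ‖x − x*‖ ≤ min{ 2ς/(5L_F), (1/(12L_F))·( (3M_F + 5ς) − √((3M_F + 5ς)² − 24ς²) ) }. Let 0 < L ≤ 2L_F, put t = ‖x − x*‖ and x⁺ = T_{L, f₁(x)}(x). Then ‖x⁺ − x*‖ ≤ ( (3L_F·t²)/2 + t·√( f₁(x)·L + L_F²·t²/4 ) ) / (ς − L_F·t) < t. (Lemma 6: contraction region for the exact step with τ = f₁(x).) -/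
open scoped RealInnerProductSpace

theorem Convex.norm_image_sub_sub_fderiv_le_of_lipschitz
    {E G : Type*} [NormedAddCommGroup E] [NormedSpace ℝ E]
    [NormedAddCommGroup G] [NormedSpace ℝ G]
    {f : E → G} {f' : E → E →L[ℝ] G} {s : Set E} {K : ℝ} (hK : 0 ≤ K)
    (hf : ∀ z ∈ s, HasFDerivWithinAt f (f' z) s z) (hs : Convex ℝ s)
    (hLip : ∀ x ∈ s, ∀ y ∈ s, ‖f' y - f' x‖ ≤ K * ‖y - x‖)
    {x y : E} (hx : x ∈ s) (hy : y ∈ s) :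
    ‖f y - f x - f' x (y - x)‖ ≤ K * ‖y - x‖ ^ 2 := by
  set B := s ∩ Metric.closedBall x ‖y - x‖
  have hB : Convex ℝ B := hs.inter (convex_closedBall _ _)
  have hxB : x ∈ B := ⟨hx, Metric.mem_closedBall_self (norm_nonneg _)⟩
  have hyB : y ∈ B := ⟨hy, by rw [Metric.mem_closedBall, dist_eq_norm]⟩
  have hbound : ∀ z ∈ B, ‖f' z - f' x‖ ≤ K * ‖y - x‖ := fun z hz =>
    (hLip x hx z hz.1).trans <| mul_le_mul_of_nonneg_left
      (by simpa [dist_eq_norm] using hz.2) hK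
  calc ‖f y - f x - f' x (y - x)‖ ≤ K * ‖y - x‖ * ‖y - x‖ :=
        hB.norm_image_sub_le_of_norm_hasFDerivWithin_le'
          (fun z hz => (hf z hz.1).mono Set.inter_subset_left) hbound hxB hyB
    _ = K * ‖y - x‖ ^ 2 := by ring

theorem ContinuousLinearMap.sub_mul_norm_le_norm_apply_of_norm_sub_le
    {E G : Type*} [SeminormedAddCommGroup E] [NormedSpace ℝ E]
    [SeminormedAddCommGroup G] [NormedSpace ℝ G]
    {A B : E →L[ℝ] G} {ς δ : ℝ} (hA : ∀ h, ς * ‖h‖ ≤ ‖A h‖) (hAB : ‖A - B‖ ≤ δ) (h : E) :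
    (ς - δ) * ‖h‖ ≤ ‖B h‖ := by
  have : ‖A h‖ ≤ δ * ‖h‖ + ‖B h‖ :=
    calc ‖A h‖ ≤ ‖(A - B) h‖ + ‖B h‖ := by
          simpa using norm_add_le ((A - B) h) (B h)
      _ ≤ δ * ‖h‖ + ‖B h‖ := by
          gcongr
          exact ((A - B).le_opNorm h).trans (mul_le_mul_of_nonneg_right hAB (norm_nonneg h))
  linarith [hA h]

section LeastSquares

variable {E G : Type*} [NormedAddCommGroup E] [InnerProductSpace ℝ E]
  [NormedAddCommGroup G] [InnerProductSpace ℝ G]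

theorem inner_add_mul_inner_eq_zero_of_forall_le (A : E →L[ℝ] G) (b : G) (μ : ℝ) {y : E}
    (hy : ∀ z, ‖b + A y‖ ^ 2 + μ * ‖y‖ ^ 2 ≤ ‖b + A z‖ ^ 2 + μ * ‖z‖ ^ 2) (v : E) :
    ⟪b + A y, A v⟫ + μ * ⟪y, v⟫ = 0 := by
  have hline : HasDerivAt (fun ε : ℝ => y + ε • v) v 0 := by
    simpa using ((hasDerivAt_id (0 : ℝ)).smul_const v).const_add y
  have hderiv : HasDerivAt (fun ε : ℝ => ‖b + A (y + ε • v)‖ ^ 2 + μ * ‖y + ε • v‖ ^ 2)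
      (2 * ⟪b + A y, A v⟫ + μ * (2 * ⟪y, v⟫)) 0 := by
    have hres : HasDerivAt (fun ε : ℝ => b + A (y + ε • v)) (A v) 0 :=
      (A.hasFDerivAt.comp_hasDerivAt 0 hline).const_add b
    have h := hres.norm_sq.add (hline.norm_sq.const_mul μ)
    simp only [zero_smul, add_zero] at h
    exact h
  have hmin : IsLocalMin (fun ε : ℝ => ‖b + A (y + ε • v)‖ ^ 2 + μ * ‖y + ε • v‖ ^ 2) 0 :=
    Filter.Eventually.of_forall fun ε => by simpa using hy (y + ε • v)
  linarith [hmin.hasDerivAt_eq_zero hderiv]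

theorem sq_add_mul_sq_le_of_forall_le (A : E →L[ℝ] G) (b : G) {μ : ℝ} (hμ : 0 ≤ μ) {y : E}
    (hy : ∀ z, ‖b + A y‖ ^ 2 + μ * ‖y‖ ^ 2 ≤ ‖b + A z‖ ^ 2 + μ * ‖z‖ ^ 2) (e : E) :
    ‖A (y + e)‖ ^ 2 + μ * ‖y + e‖ ^ 2 ≤ ‖b - A e‖ * ‖A (y + e)‖ + μ * (‖e‖ * ‖y + e‖) := by
  set s := y + e
  have hnormal := inner_add_mul_inner_eq_zero_of_forall_le A b μ hy s
  have hres : b + A y = (b - A e) + A s := by simp only [s, map_add]; abel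
  have hy_eq : y = s - e := by simp only [s]; abel
  rw [hres, hy_eq, inner_add_left, inner_sub_left (𝕜 := ℝ) s, real_inner_self_eq_norm_sq,
    real_inner_self_eq_norm_sq] at hnormal
  have hcs₁ : -⟪b - A e, A s⟫ ≤ ‖b - A e‖ * ‖A s‖ :=
    (neg_le_abs _).trans (abs_real_inner_le_norm _ _)
  have hcs₂ : μ * ⟪e, s⟫ ≤ μ * (‖e‖ * ‖s‖) :=
    mul_le_mul_of_nonneg_left (real_inner_le_norm e s) hμ
  linarith

end LeastSquares

theorem psi_le_psi_iff {n m : ℕ}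
    {F : EuclideanSpace ℝ (Fin n) → EuclideanSpace ℝ (Fin m)}
    {F' : EuclideanSpace ℝ (Fin n) → EuclideanSpace ℝ (Fin n) →L[ℝ] EuclideanSpace ℝ (Fin m)}
    {x : EuclideanSpace ℝ (Fin n)} {L τ : ℝ} (hτ : 0 < τ) {y y' : EuclideanSpace ℝ (Fin n)} :
    psi F F' x L τ y ≤ psi F F' x L τ y' ↔
      ‖F x + F' x (y - x)‖ ^ 2 + τ * L * ‖y - x‖ ^ 2
        ≤ ‖F x + F' x (y' - x)‖ ^ 2 + τ * L * ‖y' - x‖ ^ 2 := by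
  have hpsi : ∀ z, psi F F' x L τ z
      = τ / 2 + (‖F x + F' x (z - x)‖ ^ 2 + τ * L * ‖z - x‖ ^ 2) / (2 * τ) := by
    intro z
    simp only [psi]
    field_simp
    ring
  rw [hpsi, hpsi, add_le_add_iff_left, div_le_div_iff_of_pos_right (by positivity)]

theorem le_add_mul_sqrt_of_sq_add_le {a u ρ κ t : ℝ} (hρ : 0 ≤ ρ) (hκ : 0 ≤ κ) (ht : 0 ≤ t)
    (h : a ^ 2 + κ * u ^ 2 ≤ ρ * a + κ * (t * u)) : a ≤ ρ + t * √κ / 2 := by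
  have hsq : (t * √κ / 2) ^ 2 = κ * t ^ 2 / 4 := by
    rw [div_pow, mul_pow, Real.sq_sqrt hκ]; ring
  have hquad : a * (a - ρ) ≤ (t * √κ / 2) ^ 2 := by
    nlinarith [mul_nonneg hκ (sq_nonneg (t - 2 * u))]
  nlinarith [mul_nonneg ht (Real.sqrt_nonneg κ)]

/-- The second radius condition says that `r = L_F t` lies below the smaller root of
`6 r² - (3 M_F + 5 ς) r + ς²`, i.e. `(ς - 5 r / 2)² - r² / 4 ≥ 3 M_F r`, which dominates `τ L`. -/
theorem sqrt_lt_of_le_contraction_radius {ς MF LF t τ L : ℝ} (hLF : 0 < LF)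
    (hτ : 0 < τ) (hL : L ≤ 2 * LF) (hτt : τ ≤ MF * t)
    (hrad₁ : t ≤ 2 * ς / (5 * LF))
    (hrad₂ : t ≤ 1 / (12 * LF) * ((3 * MF + 5 * ς) - √((3 * MF + 5 * ς) ^ 2 - 24 * ς ^ 2))) :
    0 < ς - 5 * LF * t / 2 ∧ √(τ * L + LF ^ 2 * t ^ 2 / 4) < ς - 5 * LF * t / 2 := by
  rw [le_div_iff₀ (by positivity)] at hrad₁
  rw [one_div_mul_eq_div, le_div_iff₀ (by positivity)] at hrad₂
  have hdisc := (Real.sqrt_le_iff.1 (show √((3 * MF + 5 * ς) ^ 2 - 24 * ς ^ 2)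
    ≤ 3 * MF + 5 * ς - 12 * LF * t by linarith)).2
  have hτL : τ * L ≤ 2 * LF * (MF * t) := by
    nlinarith [mul_le_mul_of_nonneg_left hL hτ.le, mul_le_mul_of_nonneg_left hτt hLF.le]
  have hgap : τ * L + LF ^ 2 * t ^ 2 / 4 + LF * τ ≤ (ς - 5 * LF * t / 2) ^ 2 := by
    nlinarith [mul_le_mul_of_nonneg_left hτt hLF.le]
  have hpos : 0 < ς - 5 * LF * t / 2 := by
    refine lt_of_le_of_ne (by linarith) fun h => ?_
    rw [← h] at hgap
    nlinarith [mul_pos hLF hτ]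
  exact ⟨hpos, (Real.sqrt_lt' hpos).2 (by nlinarith [mul_pos hLF hτ])⟩

theorem contraction_region_exact_step_general
    {n m : ℕ}
    (F : EuclideanSpace ℝ (Fin n) → EuclideanSpace ℝ (Fin m))
    (F' : EuclideanSpace ℝ (Fin n) →
      EuclideanSpace ℝ (Fin n) →L[ℝ] EuclideanSpace ℝ (Fin m))
    (hF : ∀ x, HasFDerivAt F (F' x) x)
    (𝓕 : Set (EuclideanSpace ℝ (Fin n)))
    (h𝓕conv : Convex ℝ 𝓕)
    (LF : ℝ) (hLF : 0 < LF)
    (hLip : ∀ x ∈ 𝓕, ∀ y ∈ 𝓕, ‖F' y - F' x‖ ≤ LF * ‖y - x‖)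
    (xstar : EuclideanSpace ℝ (Fin n)) (hxstar : xstar ∈ 𝓕)
    (ς : ℝ) (MF : ℝ)
    (hsol : F xstar = 0)
    (hςbound : ∀ h : EuclideanSpace ℝ (Fin n), ς * ‖h‖ ≤ ‖F' xstar h‖)
    (hMFbound : ∀ x ∈ 𝓕, ‖F' x‖ ≤ MF)
    (x : EuclideanSpace ℝ (Fin n)) (hx : x ∈ 𝓕) (hfx : 0 < ‖F x‖)
    (hlow : 0 < ‖x - xstar‖)
    (hrad : ‖x - xstar‖ ≤ min (2 * ς / (5 * LF))
      (1 / (12 * LF) * ((3 * MF + 5 * ς)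
        - Real.sqrt ((3 * MF + 5 * ς) ^ 2 - 24 * ς ^ 2))))
    (L : ℝ) (hL0 : 0 < L) (hL : L ≤ 2 * LF)
    (xp : EuclideanSpace ℝ (Fin n))
    (hxp : ∀ y, psi F F' x L ‖F x‖ xp ≤ psi F F' x L ‖F x‖ y) :
    ‖xp - xstar‖ ≤ (3 * LF * ‖x - xstar‖ ^ 2 / 2
        + ‖x - xstar‖ * Real.sqrt (‖F x‖ * L + LF ^ 2 * ‖x - xstar‖ ^ 2 / 4))
        / (ς - LF * ‖x - xstar‖)
    ∧ (3 * LF * ‖x - xstar‖ ^ 2 / 2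
        + ‖x - xstar‖ * Real.sqrt (‖F x‖ * L + LF ^ 2 * ‖x - xstar‖ ^ 2 / 4))
        / (ς - LF * ‖x - xstar‖) < ‖x - xstar‖ := by
  set t := ‖x - xstar‖ with ht
  set τ := ‖F x‖
  have hlin : ‖F x - F' x (x - xstar)‖ ≤ LF * t ^ 2 := by
    have h := h𝓕conv.norm_image_sub_sub_fderiv_le_of_lipschitz hLF.le
      (fun z _ => (hF z).hasFDerivWithinAt) hLip hx hxstar
    rw [hsol, ← neg_sub x xstar, map_neg, norm_neg] at h
    calc ‖F x - F' x (x - xstar)‖ = ‖0 - F x - -F' x (x - xstar)‖ := by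
          rw [← norm_neg]; congr 1; abel
      _ ≤ LF * t ^ 2 := h
  have hτt : τ ≤ MF * t := by
    simpa [hsol] using h𝓕conv.norm_image_sub_le_of_norm_hasFDerivWithin_le
      (fun z _ => (hF z).hasFDerivWithinAt) hMFbound hxstar hx
  have hstable : (ς - LF * t) * ‖xp - xstar‖ ≤ ‖F' x (xp - xstar)‖ :=
    ContinuousLinearMap.sub_mul_norm_le_norm_apply_of_norm_sub_le hςbound
      (by simpa [ht, norm_sub_rev] using hLip x hx xstar hxstar) _
  have hkey := sq_add_mul_sq_le_of_forall_le (F' x) (F x) (by positivity : 0 ≤ τ * L)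
    (y := xp - x) (fun z => by simpa using (psi_le_psi_iff hfx).1 (hxp (x + z))) (x - xstar)
  rw [sub_add_sub_cancel] at hkey
  obtain ⟨hgap, hS⟩ := sqrt_lt_of_le_contraction_radius hLF hfx hL hτt
    (hrad.trans (min_le_left _ _)) (hrad.trans (min_le_right _ _))
  have hresid := le_add_mul_sqrt_of_sq_add_le (norm_nonneg _) (by positivity) hlow.le hkey
  have hJs : ‖F' x (xp - xstar)‖ ≤ 3 * LF * t ^ 2 / 2 + t * √(τ * L + LF ^ 2 * t ^ 2 / 4) := by
    have hsqrt : √(τ * L) ≤ √(τ * L + LF ^ 2 * t ^ 2 / 4) :=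
      Real.sqrt_le_sqrt (le_add_of_nonneg_right (by positivity))
    nlinarith [mul_le_mul_of_nonneg_left hsqrt hlow.le, mul_pos hLF (pow_pos hlow 2),
      mul_nonneg hlow.le (Real.sqrt_nonneg (τ * L))]
  have hc : 0 < ς - LF * t := by linarith [mul_pos hLF hlow]
  constructor
  · rw [le_div_iff₀ hc]
    linarith
  · rw [div_lt_iff₀ hc]
    nlinarith [mul_lt_mul_of_pos_left hS hlow]

/-- **Lemma 6.** Contraction region for the exact step with `τ = f₁(x)`. -/
theorem contraction_region_exact_step
    {n m : ℕ}
    (F : EuclideanSpace ℝ (Fin n) → EuclideanSpace ℝ (Fin m))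
    (F' : EuclideanSpace ℝ (Fin n) →
      EuclideanSpace ℝ (Fin n) →L[ℝ] EuclideanSpace ℝ (Fin m))
    (hF : ∀ x, HasFDerivAt F (F' x) x)
    (𝓕 : Set (EuclideanSpace ℝ (Fin n)))
    (h𝓕closed : IsClosed 𝓕) (h𝓕conv : Convex ℝ 𝓕)
    (LF : ℝ) (hLF : 0 < LF)
    (hLip : ∀ x ∈ 𝓕, ∀ y ∈ 𝓕, ‖F' y - F' x‖ ≤ LF * ‖y - x‖)
    (xstar : EuclideanSpace ℝ (Fin n)) (hxstar : xstar ∈ 𝓕)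
    (ς : ℝ) (hς : 0 < ς) (MF : ℝ) (hMF : 0 < MF)
    (hsol : F xstar = 0)
    (hςbound : ∀ h : EuclideanSpace ℝ (Fin n), ς * ‖h‖ ≤ ‖F' xstar h‖)
    (hMFbound : ∀ x ∈ 𝓕, ‖F' x‖ ≤ MF)
    (x : EuclideanSpace ℝ (Fin n)) (hx : x ∈ 𝓕) (hfx : 0 < ‖F x‖)
    (hlow : 0 < ‖x - xstar‖)
    (hrad : ‖x - xstar‖ ≤ min (2 * ς / (5 * LF))
      (1 / (12 * LF) * ((3 * MF + 5 * ς)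
        - Real.sqrt ((3 * MF + 5 * ς) ^ 2 - 24 * ς ^ 2))))
    (L : ℝ) (hL0 : 0 < L) (hL : L ≤ 2 * LF)
    (xp : EuclideanSpace ℝ (Fin n))
    (hxp : ∀ y, psi F F' x L ‖F x‖ xp ≤ psi F F' x L ‖F x‖ y) :
    ‖xp - xstar‖ ≤ (3 * LF * ‖x - xstar‖ ^ 2 / 2
        + ‖x - xstar‖ * Real.sqrt (‖F x‖ * L + LF ^ 2 * ‖x - xstar‖ ^ 2 / 4))
        / (ς - LF * ‖x - xstar‖)
    ∧ (3 * LF * ‖x - xstar‖ ^ 2 / 2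
        + ‖x - xstar‖ * Real.sqrt (‖F x‖ * L + LF ^ 2 * ‖x - xstar‖ ^ 2 / 4))
        / (ς - LF * ‖x - xstar‖) < ‖x - xstar‖ :=
  contraction_region_exact_step_general F F' hF 𝓕 h𝓕conv LF hLF hLip xstar hxstar ς MF hsol hςbound
    hMFbound x hx hfx hlow hrad L hL0 hL xp hxp
end

section
/- Let L ∈ (0, L_F], ε ≥ 0, let k ≥ 1 be an integer and r > 0. Suppose points x₀, x₁, …, x_k ∈ E₁ and numbers L₀, …, L_{k−1} satisfy, for every 0 ≤ i < k: f₁(x_i) > 0, L ≤ L_i ≤ 2L_F, ψ_{x_i,L_i,f₁(x_i)}(x_{i+1}) − ψ_{x_i,L_i,f₁(x_i)}(T_{L_i,f₁(x_i)}(x_i)) ≤ ε, f₁(x_i) ≥ ψ_{x_i,L_i,f₁(x_i)}(x_{i+1}), and f₁(x_{i+1}) ≤ ψ_{x_i,L_i,f₁(x_i)}(x_{i+1}). Then (8L_F²/L)·( ε + (f₁(x₀) − f₁(x_k))/k ) ≥ min_{0≤i<k} ‖2L_F·(T_{2L_F, f₁(x_i)}(x_i) − x_i)‖², and L_F·( ε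 + (f₁(x₀) − f₁(x_k))/k ) ≥ min_{0≤i<k} 2·(L_F·r)²·κ( Δ_r(x_i)/(4·f₁(x_i)·L_F·r²) ). (Theorem 1: global sublinear convergence of the inexact normalized-squares method.) -/
/-- `κ(t) = t²/2` for `0 ≤ t ≤ 1`, `κ(t) = t − 1/2` for `t > 1`. -/
noncomputable def kappa (t : ℝ) : ℝ := if t ≤ 1 then t ^ 2 / 2 else t - 1 / 2

/-- `Δ_r(x) = f₂(x) − inf {φ(x,y)² : ‖y − x‖ ≤ r}`. -/
noncomputable def Delta {n m : ℕ}
    (F : EuclideanSpace ℝ (Fin n) → EuclideanSpace ℝ (Fin m))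
    (F' : EuclideanSpace ℝ (Fin n) →
      EuclideanSpace ℝ (Fin n) →L[ℝ] EuclideanSpace ℝ (Fin m))
    (r : ℝ) (x : EuclideanSpace ℝ (Fin n)) : ℝ :=
  ‖F x‖ ^ 2 - sInf ((fun y => ‖F x + F' x (y - x)‖ ^ 2) '' Metric.closedBall x r)

/-! Each step lowers `‖F‖` by at least the decrease `‖F xᵢ‖ - min ψ` promised by its model,
up to `ε`, so telescoping gives a step `i < k` whose model decrease is at most
`ε + (‖F x₀‖ - ‖F x_k‖) / k`. This decrease controls both quantities. Comparing the minimizer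
`z` of `ψ_{x,2L_F,τ}` with the midpoint of `[x, z]` bounds `‖z - x‖²`. Evaluating `ψ` at
`x + α (y - x)`, where `y` minimizes `φ(x, ·)` on the ball of radius `r`, bounds the decrease
below by `2 L_F r² (α δ - α² / 2)` with `δ = Δ_r(x) / (4 τ L_F r²)`, and `α = min δ 1`
turns this into `2 L_F r² κ(δ)`. -/

section

variable {n m : ℕ} {F : EuclideanSpace ℝ (Fin n) → EuclideanSpace ℝ (Fin m)}
  {F' : EuclideanSpace ℝ (Fin n) → EuclideanSpace ℝ (Fin n) →L[ℝ] EuclideanSpace ℝ (Fin m)}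
  {x y z z₂ : EuclideanSpace ℝ (Fin n)} {L L₁ L₂ τ : ℝ}

theorem kappa_eq_min (t : ℝ) : kappa t = min t 1 * t - min t 1 ^ 2 / 2 := by
  unfold kappa
  split_ifs with ht
  · rw [min_eq_left ht]; ring
  · rw [min_eq_right (le_of_not_ge ht)]; ring

theorem exists_lt_le_telescoping_average {g f : ℕ → ℝ} {ε : ℝ} {k : ℕ} (hk : 0 < k)
    (h : ∀ i < k, g i ≤ ε + (f i - f (i + 1))) :
    ∃ i < k, g i ≤ ε + (f 0 - f k) / k := by
  have hsum : ∑ i ∈ Finset.range k, g i ≤ ∑ _i ∈ Finset.range k, (ε + (f 0 - f k) / k) :=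
    calc ∑ i ∈ Finset.range k, g i ≤ ∑ i ∈ Finset.range k, (ε + (f i - f (i + 1))) :=
          Finset.sum_le_sum fun i hi => h i (Finset.mem_range.1 hi)
      _ = ∑ _i ∈ Finset.range k, (ε + (f 0 - f k) / k) := by
          rw [Finset.sum_add_distrib, Finset.sum_range_sub', Finset.sum_const,
            Finset.sum_const, Finset.card_range, nsmul_eq_mul, nsmul_eq_mul]
          field_simp
  obtain ⟨i, hi, hgi⟩ := Finset.exists_le_of_sum_le (Finset.nonempty_range_iff.2 hk.ne') hsum
  exact ⟨i, Finset.mem_range.1 hi, hgi⟩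

theorem psi_self (L : ℝ) : psi F F' x L ‖F x‖ x = ‖F x‖ := by
  rw [psi, sub_self, map_zero, add_zero, norm_zero]
  rcases eq_or_ne ‖F x‖ 0 with h | h
  · simp [h]
  · field_simp
    ring

theorem psi_le_psi_of_le (hL : L₁ ≤ L₂) (y : EuclideanSpace ℝ (Fin n)) :
    psi F F' x L₁ τ y ≤ psi F F' x L₂ τ y := by
  unfold psi
  gcongr

theorem psi_add_smul (t : ℝ) (d : EuclideanSpace ℝ (Fin n)) :
    psi F F' x L τ (x + t • d)
      = τ / 2 + ‖F x‖ ^ 2 / (2 * τ) + t * (inner ℝ (F x) (F' x d) / τ)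
        + t ^ 2 * (‖F' x d‖ ^ 2 / (2 * τ) + L / 2 * ‖d‖ ^ 2) := by
  rw [psi, add_sub_cancel_left, map_smul, norm_add_sq_real, inner_smul_right, norm_smul,
    norm_smul, Real.norm_eq_abs, mul_pow, mul_pow, sq_abs]
  ring

theorem div_four_mul_sq_norm_sub_le_sub_psi (hτ : 0 < ‖F x‖)
    (hz : ∀ y, psi F F' x L ‖F x‖ z ≤ psi F F' x L ‖F x‖ y) :
    L / 4 * ‖z - x‖ ^ 2 ≤ ‖F x‖ - psi F F' x L ‖F x‖ z := by
  obtain ⟨d, rfl⟩ : ∃ d, z = x + (1 : ℝ) • d := ⟨z - x, by simp⟩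
  have hmid := hz (x + (1 / 2 : ℝ) • d)
  rw [psi_add_smul, psi_add_smul] at hmid
  rw [psi_add_smul, add_sub_cancel_left, one_smul]
  have hW : 0 ≤ ‖F' x d‖ ^ 2 / (2 * ‖F x‖) := by positivity
  have hself : ‖F x‖ ^ 2 / (2 * ‖F x‖) = ‖F x‖ / 2 := by field_simp
  linarith

theorem sq_norm_smul_sub_le_sub_psi {LF : ℝ} (hτ : 0 < ‖F x‖) (hLF : 0 ≤ LF)
    (hL : L ≤ 2 * LF) (hz : ∀ y, psi F F' x L ‖F x‖ z ≤ psi F F' x L ‖F x‖ y)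
    (hz₂ : ∀ y, psi F F' x (2 * LF) ‖F x‖ z₂ ≤ psi F F' x (2 * LF) ‖F x‖ y) :
    ‖(2 * LF) • (z₂ - x)‖ ^ 2 ≤ 8 * LF * (‖F x‖ - psi F F' x L ‖F x‖ z) :=
  calc ‖(2 * LF) • (z₂ - x)‖ ^ 2 = 8 * LF * (2 * LF / 4 * ‖z₂ - x‖ ^ 2) := by
        rw [norm_smul, Real.norm_of_nonneg (by positivity)]
        ring
    _ ≤ 8 * LF * (‖F x‖ - psi F F' x (2 * LF) ‖F x‖ z₂) := by
        gcongr
        exact div_four_mul_sq_norm_sub_le_sub_psi hτ hz₂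
    _ ≤ 8 * LF * (‖F x‖ - psi F F' x L ‖F x‖ z) := by
        gcongr
        exact (hz _).trans (psi_le_psi_of_le hL _)

theorem Delta_nonneg {r : ℝ} (hr : 0 ≤ r) : 0 ≤ Delta F F' r x := by
  rw [Delta, sub_nonneg]
  refine csInf_le ⟨0, ?_⟩ ⟨x, Metric.mem_closedBall_self hr, by simp⟩
  rintro _ ⟨y, -, rfl⟩
  positivity

theorem exists_mem_closedBall_Delta_eq {r : ℝ} (hr : 0 ≤ r) :
    ∃ y ∈ Metric.closedBall x r, Delta F F' r x = ‖F x‖ ^ 2 - ‖F x + F' x (y - x)‖ ^ 2 := by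
  have hK := (isCompact_closedBall x r).image
    (f := fun y => ‖F x + F' x (y - x)‖ ^ 2) (by fun_prop)
  obtain ⟨y, hy, hmin⟩ := hK.sInf_mem ((Metric.nonempty_closedBall.2 hr).image _)
  exact ⟨y, hy, by rw [Delta, ← hmin]⟩

theorem mul_sub_le_sub_psi_add_smul {α : ℝ} (hτ : 0 < ‖F x‖) (hα0 : 0 ≤ α) (hα1 : α ≤ 1) :
    α * (‖F x‖ ^ 2 - ‖F x + F' x (y - x)‖ ^ 2) / (2 * ‖F x‖) - L / 2 * α ^ 2 * ‖y - x‖ ^ 2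
      ≤ ‖F x‖ - psi F F' x L ‖F x‖ (x + α • (y - x)) := by
  set s := ‖F x + F' x (y - x)‖
  have hφ : ‖F x + F' x (α • (y - x))‖ ≤ (1 - α) * ‖F x‖ + α * s := by
    calc ‖F x + F' x (α • (y - x))‖ = ‖(1 - α) • F x + α • (F x + F' x (y - x))‖ := by
          rw [map_smul]
          congr 1
          module
      _ ≤ (1 - α) * ‖F x‖ + α * s := by
          refine (norm_add_le _ _).trans_eq ?_
          rw [norm_smul, norm_smul, Real.norm_of_nonneg hα0,
            Real.norm_of_nonneg (sub_nonneg.2 hα1)]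
  -- `(1 - α) a ^ 2 + α b ^ 2 - ((1 - α) a + α b) ^ 2 = α (1 - α) (a - b) ^ 2`
  have hφ2 : ‖F x + F' x (α • (y - x))‖ ^ 2 ≤ ‖F x‖ ^ 2 - α * (‖F x‖ ^ 2 - s ^ 2) := by
    calc ‖F x + F' x (α • (y - x))‖ ^ 2 ≤ ((1 - α) * ‖F x‖ + α * s) ^ 2 := by gcongr
      _ ≤ ‖F x‖ ^ 2 - α * (‖F x‖ ^ 2 - s ^ 2) := by
          nlinarith [mul_nonneg (mul_nonneg hα0 (sub_nonneg.2 hα1)) (sq_nonneg (‖F x‖ - s))]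
  have hφ2' := div_le_div_of_nonneg_right hφ2 (by positivity : (0 : ℝ) ≤ 2 * ‖F x‖)
  have hsplit : (‖F x‖ ^ 2 - α * (‖F x‖ ^ 2 - s ^ 2)) / (2 * ‖F x‖)
      = ‖F x‖ / 2 - α * (‖F x‖ ^ 2 - s ^ 2) / (2 * ‖F x‖) := by
    field_simp
  rw [psi, add_sub_cancel_left, norm_smul, Real.norm_of_nonneg hα0]
  linarith

theorem two_mul_sq_mul_kappa_le_sub_psi {LF r : ℝ} (hτ : 0 < ‖F x‖) (hLF : 0 < LF)
    (hr : 0 < r) (hL : L ≤ 2 * LF) (hz : ∀ y, psi F F' x L ‖F x‖ z ≤ psi F F' x L ‖F x‖ y) :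
    2 * LF * r ^ 2 * kappa (Delta F F' r x / (4 * ‖F x‖ * LF * r ^ 2))
      ≤ ‖F x‖ - psi F F' x L ‖F x‖ z := by
  obtain ⟨y, hy, hΔ⟩ := exists_mem_closedBall_Delta_eq (F := F) (F' := F') (x := x) hr.le
  obtain ⟨δ, hδ, hΔδ⟩ : ∃ δ, Delta F F' r x / (4 * ‖F x‖ * LF * r ^ 2) = δ
      ∧ Delta F F' r x = δ * (4 * ‖F x‖ * LF * r ^ 2) :=
    ⟨_, rfl, (div_mul_cancel₀ _ (by positivity)).symm⟩
  have hδ0 : 0 ≤ δ := hδ ▸ div_nonneg (Delta_nonneg hr.le) (by positivity)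
  have hα0 : 0 ≤ min δ 1 := le_min hδ0 zero_le_one
  have hyx : ‖y - x‖ ≤ r := by rwa [Metric.mem_closedBall, dist_eq_norm] at hy
  have hreg : L / 2 * ‖y - x‖ ^ 2 ≤ LF * r ^ 2 :=
    calc L / 2 * ‖y - x‖ ^ 2 ≤ LF * ‖y - x‖ ^ 2 := by gcongr; linarith
      _ ≤ LF * r ^ 2 := by gcongr
  calc 2 * LF * r ^ 2 * kappa (Delta F F' r x / (4 * ‖F x‖ * LF * r ^ 2))
      = min δ 1 * Delta F F' r x / (2 * ‖F x‖) - LF * r ^ 2 * min δ 1 ^ 2 := by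
        rw [hδ, kappa_eq_min, hΔδ]
        field_simp
        ring
    _ ≤ min δ 1 * Delta F F' r x / (2 * ‖F x‖) - L / 2 * min δ 1 ^ 2 * ‖y - x‖ ^ 2 := by
        nlinarith [mul_le_mul_of_nonneg_left hreg (sq_nonneg (min δ 1))]
    _ ≤ ‖F x‖ - psi F F' x L ‖F x‖ (x + min δ 1 • (y - x)) := by
        rw [hΔ]
        exact mul_sub_le_sub_psi_add_smul hτ hα0 (min_le_right _ _)
    _ ≤ ‖F x‖ - psi F F' x L ‖F x‖ z := sub_le_sub_left (hz _) _

end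

theorem global_sublinear_convergence_general
    {n m : ℕ}
    (F : EuclideanSpace ℝ (Fin n) → EuclideanSpace ℝ (Fin m))
    (F' : EuclideanSpace ℝ (Fin n) →
      EuclideanSpace ℝ (Fin n) →L[ℝ] EuclideanSpace ℝ (Fin m))
    (LF : ℝ) (hLF : 0 < LF)
    (T : ℝ → ℝ → EuclideanSpace ℝ (Fin n) → EuclideanSpace ℝ (Fin n))
    (hT : ∀ L τ x, 0 < L → 0 < τ → ∀ y, psi F F' x L τ (T L τ x) ≤ psi F F' x L τ y)
    (L ε : ℝ) (hL0 : 0 < L) (hLLF : L ≤ LF)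
    (k : ℕ) (hk : 1 ≤ k) (r : ℝ) (hr : 0 < r)
    (x : ℕ → EuclideanSpace ℝ (Fin n)) (Lk : ℕ → ℝ)
    (hpos : ∀ i < k, 0 < ‖F (x i)‖)
    (hLk : ∀ i < k, L ≤ Lk i ∧ Lk i ≤ 2 * LF)
    (hstep : ∀ i < k, psi F F' (x i) (Lk i) ‖F (x i)‖ (x (i + 1))
        - psi F F' (x i) (Lk i) ‖F (x i)‖ (T (Lk i) ‖F (x i)‖ (x i)) ≤ ε)
    (hub : ∀ i < k, ‖F (x (i + 1))‖ ≤ psi F F' (x i) (Lk i) ‖F (x i)‖ (x (i + 1))) :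
    (Finset.range k).inf' (Finset.nonempty_range_iff.mpr (Nat.one_le_iff_ne_zero.mp hk))
        (fun i => ‖(2 * LF) • (T (2 * LF) ‖F (x i)‖ (x i) - x i)‖ ^ 2)
      ≤ 8 * LF ^ 2 / L * (ε + (‖F (x 0)‖ - ‖F (x k)‖) / (k : ℝ))
    ∧ (Finset.range k).inf' (Finset.nonempty_range_iff.mpr (Nat.one_le_iff_ne_zero.mp hk))
        (fun i => 2 * (LF * r) ^ 2
          * kappa (Delta F F' r (x i) / (4 * ‖F (x i)‖ * LF * r ^ 2)))
      ≤ LF * (ε + (‖F (x 0)‖ - ‖F (x k)‖) / (k : ℝ)) := by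
  set gap : ℕ → ℝ := fun i ↦
    ‖F (x i)‖ - psi F F' (x i) (Lk i) ‖F (x i)‖ (T (Lk i) ‖F (x i)‖ (x i))
  obtain ⟨i, hik, hgap⟩ := exists_lt_le_telescoping_average (g := gap)
    (f := fun i ↦ ‖F (x i)‖) (ε := ε) hk fun i hi ↦ by linarith [hstep i hi, hub i hi]
  have hτ := hpos i hik
  obtain ⟨hLi, hLi2⟩ := hLk i hik
  have hzi := hT (Lk i) _ (x i) (hL0.trans_le hLi) hτ
  have hz2 := hT (2 * LF) _ (x i) (by positivity) hτ
  have hgap0 : 0 ≤ gap i := sub_nonneg.2 ((hzi _).trans_eq (psi_self _))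
  refine ⟨(Finset.inf'_le _ (Finset.mem_range.2 hik)).trans ?_,
    (Finset.inf'_le _ (Finset.mem_range.2 hik)).trans ?_⟩
  · calc _ ≤ 8 * LF * gap i := sq_norm_smul_sub_le_sub_psi hτ hLF.le hLi2 hzi hz2
      _ ≤ 8 * LF ^ 2 / L * gap i := by
          gcongr
          rw [le_div_iff₀ hL0]
          nlinarith
      _ ≤ _ := by gcongr
  · calc _ = LF * (2 * LF * r ^ 2
            * kappa (Delta F F' r (x i) / (4 * ‖F (x i)‖ * LF * r ^ 2))) := by ring
      _ ≤ _ := by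
          gcongr
          exact (two_mul_sq_mul_kappa_le_sub_psi hτ hLF hr hLi2 hzi).trans hgap

/-- **Theorem 1.** Global sublinear convergence of the inexact normalized-squares method.
Here `T L τ x` is characterized as the minimizer of `ψ_{x,L,τ}` over `E₁`. -/
theorem global_sublinear_convergence
    {n m : ℕ}
    (F : EuclideanSpace ℝ (Fin n) → EuclideanSpace ℝ (Fin m))
    (F' : EuclideanSpace ℝ (Fin n) →
      EuclideanSpace ℝ (Fin n) →L[ℝ] EuclideanSpace ℝ (Fin m))
    (hF : ∀ x, HasFDerivAt F (F' x) x)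
    (LF : ℝ) (hLF : 0 < LF)
    (hLip : ∀ x y, ‖F' y - F' x‖ ≤ LF * ‖y - x‖)
    (T : ℝ → ℝ → EuclideanSpace ℝ (Fin n) → EuclideanSpace ℝ (Fin n))
    (hT : ∀ L τ x, 0 < L → 0 < τ → ∀ y, psi F F' x L τ (T L τ x) ≤ psi F F' x L τ y)
    (L ε : ℝ) (hL0 : 0 < L) (hLLF : L ≤ LF) (hε : 0 ≤ ε)
    (k : ℕ) (hk : 1 ≤ k) (r : ℝ) (hr : 0 < r)
    (x : ℕ → EuclideanSpace ℝ (Fin n)) (Lk : ℕ → ℝ)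
    (hpos : ∀ i < k, 0 < ‖F (x i)‖)
    (hLk : ∀ i < k, L ≤ Lk i ∧ Lk i ≤ 2 * LF)
    (hstep : ∀ i < k, psi F F' (x i) (Lk i) ‖F (x i)‖ (x (i + 1))
        - psi F F' (x i) (Lk i) ‖F (x i)‖ (T (Lk i) ‖F (x i)‖ (x i)) ≤ ε)
    (hmono : ∀ i < k, psi F F' (x i) (Lk i) ‖F (x i)‖ (x (i + 1)) ≤ ‖F (x i)‖)
    (hub : ∀ i < k, ‖F (x (i + 1))‖ ≤ psi F F' (x i) (Lk i) ‖F (x i)‖ (x (i + 1))) :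
    (Finset.range k).inf' (Finset.nonempty_range_iff.mpr (Nat.one_le_iff_ne_zero.mp hk))
        (fun i => ‖(2 * LF) • (T (2 * LF) ‖F (x i)‖ (x i) - x i)‖ ^ 2)
      ≤ 8 * LF ^ 2 / L * (ε + (‖F (x 0)‖ - ‖F (x k)‖) / (k : ℝ))
    ∧ (Finset.range k).inf' (Finset.nonempty_range_iff.mpr (Nat.one_le_iff_ne_zero.mp hk))
        (fun i => 2 * (LF * r) ^ 2
          * kappa (Delta F F' r (x i) / (4 * ‖F (x i)‖ * LF * r ^ 2)))
      ≤ LF * (ε + (‖F (x 0)‖ - ‖F (x k)‖) / (k : ℝ)) :=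
  global_sublinear_convergence_general F F' LF hLF T hT L ε hL0 hLLF k hk r hr x Lk hpos hLk hstep
    hub
end

section
/- Let α ∈ (0,1) with ς > 2L_F/α. Let x ∈ ℱ with t := ‖x − x*‖ < ς/L_F − 2/α, let ε ≥ 0 and L > 0, and let τ satisfy 0 < τ ≤ ( (α·(ς − L_F·t) − 3L_F/2)² − L_F²/4 )·t⁴ / ( t²·L + 2ε ). Let x⁺ ∈ E₁ be any point with ψ_{x,L,τ}(x⁺) − ψ_{x,L,τ}(T_{L,τ}(x)) ≤ ε. Then ‖x⁺ − x*‖ ≤ ( (3L_F·t²)/2 + √( t²·(τ·L + L_F²·t²/4) + 2τε ) ) / (ς − L_F·t) ≤ α·t². (Theorem 2: local quadratic convergence of the inexact method.) -/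
section Taylor

variable {E G : Type*} [NormedAddCommGroup E] [NormedSpace ℝ E]
  [NormedAddCommGroup G] [NormedSpace ℝ G]

/-- Along the segment `r ↦ x + r • (y - x)` the remainder has derivative of norm at most
`K r ‖y - x‖²`, whose primitive vanishing at `0` is `K r² ‖y - x‖² / 2`. -/
theorem Convex.norm_sub_sub_fderiv_le {f : E → G} {f' : E → E →L[ℝ] G} {s : Set E} {K : ℝ}
    {x y : E} (hs : Convex ℝ s) (hf : ∀ z ∈ s, HasFDerivAt f (f' z) z)
    (hf' : ∀ z ∈ s, ‖f' z - f' x‖ ≤ K * ‖z - x‖) (hx : x ∈ s) (hy : y ∈ s) :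
    ‖f y - f x - f' x (y - x)‖ ≤ K / 2 * ‖y - x‖ ^ 2 := by
  set v := y - x
  have hseg : ∀ r ∈ Set.Icc (0 : ℝ) 1, x + r • v ∈ s := fun r hr => hs.add_smul_sub_mem hx hy hr
  have hderiv : ∀ r ∈ Set.Icc (0 : ℝ) 1, HasDerivAt (fun r : ℝ => f (x + r • v) - f x - r • f' x v)
      ((f' (x + r • v) - f' x) v) r := fun r hr => by
    have hline : HasDerivAt (fun r : ℝ => x + r • v) v r := by
      simpa using ((hasDerivAt_id r).smul_const v).const_add x
    exact ((((hf _ (hseg r hr)).comp_hasDerivAt r hline).sub_const (f x)).sub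
      ((hasDerivAt_id r).smul_const (f' x v))).congr_deriv (by simp)
  have hbound : ∀ r ∈ Set.Ico (0 : ℝ) 1, ‖(f' (x + r • v) - f' x) v‖ ≤ K * ‖v‖ ^ 2 * r :=
    fun r hr => calc
      ‖(f' (x + r • v) - f' x) v‖ ≤ K * ‖x + r • v - x‖ * ‖v‖ :=
        ((f' _ - f' x).le_opNorm v).trans
          (mul_le_mul_of_nonneg_right (hf' _ (hseg r (Set.Ico_subset_Icc_self hr))) (norm_nonneg v))
      _ = K * ‖v‖ ^ 2 * r := by
        rw [add_sub_cancel_left, norm_smul, Real.norm_of_nonneg hr.1]; ring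
  have hB : ∀ r : ℝ, HasDerivAt (fun r => K / 2 * ‖v‖ ^ 2 * r ^ 2) (K * ‖v‖ ^ 2 * r) r := fun r =>
    ((hasDerivAt_pow 2 r).const_mul (K / 2 * ‖v‖ ^ 2)).congr_deriv (by push_cast; ring)
  simpa [v] using image_norm_le_of_norm_deriv_right_le_deriv_boundary
    (fun r hr => (hderiv r hr).continuousAt.continuousWithinAt)
    (fun r hr => (hderiv r (Set.Ico_subset_Icc_self hr)).hasDerivWithinAt)
    (by simp) hB hbound (Set.right_mem_Icc.2 zero_le_one)

end Taylor

theorem ContinuousLinearMap.sub_opNorm_mul_le_norm_apply {𝕜 E G : Type*}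
    [NontriviallyNormedField 𝕜] [SeminormedAddCommGroup E] [NormedSpace 𝕜 E]
    [SeminormedAddCommGroup G] [NormedSpace 𝕜 G] {A B : E →L[𝕜] G} {c : ℝ}
    (hB : ∀ h, c * ‖h‖ ≤ ‖B h‖) (h : E) : (c - ‖B - A‖) * ‖h‖ ≤ ‖A h‖ := by
  have hdiff : ‖B h‖ - ‖A h‖ ≤ ‖B - A‖ * ‖h‖ :=
    (norm_sub_norm_le _ _).trans ((B - A).le_opNorm h)
  linarith [hB h]

theorem psi_residual_sq_le {n m : ℕ}
    {F : EuclideanSpace ℝ (Fin n) → EuclideanSpace ℝ (Fin m)}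
    {F' : EuclideanSpace ℝ (Fin n) → EuclideanSpace ℝ (Fin n) →L[ℝ] EuclideanSpace ℝ (Fin m)}
    {x T xp : EuclideanSpace ℝ (Fin n)} {L τ ε : ℝ} (hL : 0 ≤ L) (hτ : 0 < τ)
    (hT : ∀ y, psi F F' x L τ T ≤ psi F F' x L τ y)
    (hxp : psi F F' x L τ xp - psi F F' x L τ T ≤ ε) (y : EuclideanSpace ℝ (Fin n)) :
    ‖F x + F' x (xp - x)‖ ^ 2 ≤ ‖F x + F' x (y - x)‖ ^ 2 + τ * L * ‖y - x‖ ^ 2 + 2 * τ * ε := by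
  have hxpy : psi F F' x L τ xp ≤ psi F F' x L τ y + ε := by linarith [hT y]
  have hreg : 0 ≤ L / 2 * ‖xp - x‖ ^ 2 := by positivity
  unfold psi at hxpy
  have hres : ‖F x + F' x (xp - x)‖ ^ 2 / (2 * τ)
      ≤ ‖F x + F' x (y - x)‖ ^ 2 / (2 * τ) + L / 2 * ‖y - x‖ ^ 2 + ε := by linarith
  field_simp at hres
  linarith

theorem sqrt_le_mul_sq_of_le_div {LF a t τ L ε : ℝ} (ha : 0 ≤ a) (hden : 0 < t ^ 2 * L + 2 * ε)
    (hτ : τ ≤ (a ^ 2 - LF ^ 2 / 4) * t ^ 4 / (t ^ 2 * L + 2 * ε)) :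
    √(t ^ 2 * (τ * L + LF ^ 2 * t ^ 2 / 4) + 2 * τ * ε) ≤ a * t ^ 2 := by
  rw [le_div_iff₀ hden] at hτ
  rw [Real.sqrt_le_left (by positivity)]
  linarith

theorem local_quadratic_convergence_general
    {n m : ℕ}
    (F : EuclideanSpace ℝ (Fin n) → EuclideanSpace ℝ (Fin m))
    (F' : EuclideanSpace ℝ (Fin n) →
      EuclideanSpace ℝ (Fin n) →L[ℝ] EuclideanSpace ℝ (Fin m))
    (hF : ∀ x, HasFDerivAt F (F' x) x)
    (𝓕 : Set (EuclideanSpace ℝ (Fin n)))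
    (h𝓕conv : Convex ℝ 𝓕)
    (LF : ℝ) (hLF : 0 < LF)
    (hLip : ∀ x ∈ 𝓕, ∀ y ∈ 𝓕, ‖F' y - F' x‖ ≤ LF * ‖y - x‖)
    (xstar : EuclideanSpace ℝ (Fin n)) (hxstar : xstar ∈ 𝓕)
    (ς : ℝ)
    (hsol : F xstar = 0)
    (hςbound : ∀ h : EuclideanSpace ℝ (Fin n), ς * ‖h‖ ≤ ‖F' xstar h‖)
    (α : ℝ) (hα : α ∈ Set.Ioo (0 : ℝ) 1)
    (x : EuclideanSpace ℝ (Fin n)) (hx : x ∈ 𝓕)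
    (hrad : ‖x - xstar‖ < ς / LF - 2 / α)
    (ε : ℝ) (hε : 0 ≤ ε) (L : ℝ) (hL : 0 < L)
    (τ : ℝ) (hτ0 : 0 < τ)
    (hτ : τ ≤ ((α * (ς - LF * ‖x - xstar‖) - 3 * LF / 2) ^ 2 - LF ^ 2 / 4)
        * ‖x - xstar‖ ^ 4 / (‖x - xstar‖ ^ 2 * L + 2 * ε))
    (T : EuclideanSpace ℝ (Fin n))
    (hTmin : ∀ y, psi F F' x L τ T ≤ psi F F' x L τ y)
    (xp : EuclideanSpace ℝ (Fin n))
    (hxp : psi F F' x L τ xp - psi F F' x L τ T ≤ ε) :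
    ‖xp - xstar‖ ≤ (3 * LF * ‖x - xstar‖ ^ 2 / 2
        + Real.sqrt (‖x - xstar‖ ^ 2 * (τ * L + LF ^ 2 * ‖x - xstar‖ ^ 2 / 4) + 2 * τ * ε))
        / (ς - LF * ‖x - xstar‖)
    ∧ (3 * LF * ‖x - xstar‖ ^ 2 / 2
        + Real.sqrt (‖x - xstar‖ ^ 2 * (τ * L + LF ^ 2 * ‖x - xstar‖ ^ 2 / 4) + 2 * τ * ε))
        / (ς - LF * ‖x - xstar‖) ≤ α * ‖x - xstar‖ ^ 2 := by
  obtain ⟨hα0, -⟩ := hα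
  have ht : 0 < ‖x - xstar‖ := (norm_nonneg _).lt_of_ne fun h => by
    rw [← h] at hτ
    norm_num at hτ
    linarith
  set t := ‖x - xstar‖ with ht_def
  have hασ : 2 * LF < α * (ς - LF * t) := by
    have := mul_lt_mul_of_pos_left hrad (mul_pos hLF hα0)
    field_simp at this
    linarith
  have hσ : 0 < ς - LF * t := pos_of_mul_pos_right (by linarith) hα0.le
  have hres_star : ‖F x + F' x (xstar - x)‖ ≤ LF / 2 * t ^ 2 := by
    have := h𝓕conv.norm_sub_sub_fderiv_le (fun z _ => hF z) (fun z hz => hLip x hx z hz) hx hxstar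
    rwa [hsol, zero_sub, sub_eq_add_neg, ← neg_add, norm_neg, norm_sub_rev] at this
  have hres_plus : ‖F x + F' x (xp - x)‖
      ≤ √(t ^ 2 * (τ * L + LF ^ 2 * t ^ 2 / 4) + 2 * τ * ε) := by
    have := psi_residual_sq_le hL.le hτ0 hTmin hxp xstar
    rw [norm_sub_rev] at this
    rw [Real.le_sqrt (norm_nonneg _) (by positivity)]
    nlinarith [norm_nonneg (F x + F' x (xstar - x))]
  have herr : (ς - LF * t) * ‖xp - xstar‖
      ≤ ‖F x + F' x (xp - x)‖ + ‖F x + F' x (xstar - x)‖ := calc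
    _ ≤ (ς - ‖F' xstar - F' x‖) * ‖xp - xstar‖ := by
      gcongr
      rw [ht_def, norm_sub_rev x]
      exact hLip x hx xstar hxstar
    _ ≤ ‖F' x (xp - xstar)‖ := (F' x).sub_opNorm_mul_le_norm_apply hςbound _
    _ = ‖(F x + F' x (xp - x)) - (F x + F' x (xstar - x))‖ := by
      rw [add_sub_add_left_eq_sub, ← map_sub, sub_sub_sub_cancel_right]
    _ ≤ _ := norm_sub_le _ _
  have hsqrt := sqrt_le_mul_sq_of_le_div (a := α * (ς - LF * t) - 3 * LF / 2) (by linarith)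
    (by positivity) hτ
  constructor
  · rw [le_div_iff₀ hσ]
    linarith [mul_nonneg hLF.le (sq_nonneg t)]
  · rw [div_le_iff₀ hσ]
    linarith

/-- **Theorem 2.** Local quadratic convergence of the inexact method. -/
theorem local_quadratic_convergence
    {n m : ℕ}
    (F : EuclideanSpace ℝ (Fin n) → EuclideanSpace ℝ (Fin m))
    (F' : EuclideanSpace ℝ (Fin n) →
      EuclideanSpace ℝ (Fin n) →L[ℝ] EuclideanSpace ℝ (Fin m))
    (hF : ∀ x, HasFDerivAt F (F' x) x)
    (𝓕 : Set (EuclideanSpace ℝ (Fin n)))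
    (h𝓕closed : IsClosed 𝓕) (h𝓕conv : Convex ℝ 𝓕)
    (LF : ℝ) (hLF : 0 < LF)
    (hLip : ∀ x ∈ 𝓕, ∀ y ∈ 𝓕, ‖F' y - F' x‖ ≤ LF * ‖y - x‖)
    (xstar : EuclideanSpace ℝ (Fin n)) (hxstar : xstar ∈ 𝓕)
    (ς : ℝ) (hς : 0 < ς)
    (hsol : F xstar = 0)
    (hςbound : ∀ h : EuclideanSpace ℝ (Fin n), ς * ‖h‖ ≤ ‖F' xstar h‖)
    (α : ℝ) (hα : α ∈ Set.Ioo (0 : ℝ) 1) (hςα : 2 * LF / α < ς)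
    (x : EuclideanSpace ℝ (Fin n)) (hx : x ∈ 𝓕)
    (hrad : ‖x - xstar‖ < ς / LF - 2 / α)
    (ε : ℝ) (hε : 0 ≤ ε) (L : ℝ) (hL : 0 < L)
    (τ : ℝ) (hτ0 : 0 < τ)
    (hτ : τ ≤ ((α * (ς - LF * ‖x - xstar‖) - 3 * LF / 2) ^ 2 - LF ^ 2 / 4)
        * ‖x - xstar‖ ^ 4 / (‖x - xstar‖ ^ 2 * L + 2 * ε))
    (T : EuclideanSpace ℝ (Fin n))
    (hTmin : ∀ y, psi F F' x L τ T ≤ psi F F' x L τ y)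
    (xp : EuclideanSpace ℝ (Fin n))
    (hxp : psi F F' x L τ xp - psi F F' x L τ T ≤ ε) :
    ‖xp - xstar‖ ≤ (3 * LF * ‖x - xstar‖ ^ 2 / 2
        + Real.sqrt (‖x - xstar‖ ^ 2 * (τ * L + LF ^ 2 * ‖x - xstar‖ ^ 2 / 4) + 2 * τ * ε))
        / (ς - LF * ‖x - xstar‖)
    ∧ (3 * LF * ‖x - xstar‖ ^ 2 / 2
        + Real.sqrt (‖x - xstar‖ ^ 2 * (τ * L + LF ^ 2 * ‖x - xstar‖ ^ 2 / 4) + 2 * τ * ε))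
        / (ς - LF * ‖x - xstar‖) ≤ α * ‖x - xstar‖ ^ 2 :=
  local_quadratic_convergence_general F F' hF 𝓕 h𝓕conv LF hLF hLip xstar hxstar ς hsol hςbound α hα
    x hx hrad ε hε L hL τ hτ0 hτ T hTmin xp hxp
end

section
/- Let x ∈ E₁ with f₁(x) > 0, let ε ≥ 0 and 0 < L ≤ 2L_F, and let x⁺ ∈ E₁ satisfy ψ_{x,L,f₁(x)}(x⁺) − ψ_{x,L,f₁(x)}(T_{L,f₁(x)}(x)) ≤ ε and f₁(x⁺) ≤ ψ_{x,L,f₁(x)}(x⁺). Then: if f₁(x) ≤ μ/(4L_F), f₁(x⁺) ≤ ε + f₁(x)/2 + (L_F/μ)·f₂(x) ≤ ε + (3/4)·f₁(x); otherwise f₁(x⁺) ≤ ε + f₁(x) − μ/(16L_F). If moreover L = L_F, then: if f₁(x) ≤ μ/(2L_F), f₁(x⁺) ≤ ε + f₁(x)/2 + (L_F/(2μ))·f₂(x) ≤ ε + (3/4)·f₁(x); otherwise f₁(x⁺) ≤ ε + f₁(x) − μ/(8L_F). (Theorem 3: per-iteration decrease under the Polyak–Łojasiewicz condition.) -/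
/-!
Under the Polyak–Łojasiewicz condition, `F'(x)` has a right inverse of norm at most `μ^{-1/2}`:
there is `w` with `F'(x) w = F(x)` and `μ‖w‖² ≤ ‖F(x)‖²`. Along the segment `y_t = x - t w` the
linearization is `(1 - t) F(x)`, so with `f = ‖F(x)‖`
  `ψ(y_t) ≤ f/2 + (1 - t)² f/2 + L t² f²/(2μ)`,
and `‖F(x⁺)‖ ≤ ψ(x⁺) ≤ ε + ψ(T) ≤ ε + ψ(y_t)`. Taking `t = 1` gives the quadratic-decrease regime,
and `t = μ/(μ + L f)`, the minimizer of the right-hand side, gives the linear-decrease regime.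
-/

open ContinuousLinearMap

section PolyakLojasiewicz

variable {E G : Type*} [NormedAddCommGroup E] [InnerProductSpace ℝ E] [CompleteSpace E]
  [NormedAddCommGroup G] [InnerProductSpace ℝ G] [CompleteSpace G]
  {A : E →L[ℝ] G} {μ : ℝ}

theorem norm_sq_adjoint_apply_eq_inner (A : E →L[ℝ] G) (u : G) :
    ‖adjoint A u‖ ^ 2 = inner ℝ (A (adjoint A u)) u := by
  rw [← adjoint_inner_right, real_inner_self_eq_norm_sq]

theorem exists_apply_adjoint_eq_of_PL [FiniteDimensional ℝ G] (hμ : 0 < μ)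
    (hPL : ∀ u, μ * ‖u‖ ^ 2 ≤ ‖adjoint A u‖ ^ 2) (b : G) : ∃ v, A (adjoint A v) = b := by
  have hinj : Function.Injective (A ∘L adjoint A : G →ₗ[ℝ] G) := by
    rw [← LinearMap.ker_eq_bot, LinearMap.ker_eq_bot']
    intro u hu
    have hu' : A (adjoint A u) = 0 := hu
    have hzero : ‖adjoint A u‖ ^ 2 = 0 := by
      rw [norm_sq_adjoint_apply_eq_inner, hu', inner_zero_left]
    have hu0 : ‖u‖ ^ 2 = 0 := by nlinarith [hPL u, sq_nonneg ‖u‖]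
    simpa using hu0
  exact LinearMap.injective_iff_surjective.mp hinj b

theorem mul_norm_sq_adjoint_le_of_PL (hμ : 0 < μ) (hPL : ∀ u, μ * ‖u‖ ^ 2 ≤ ‖adjoint A u‖ ^ 2)
    {v : G} {b : G} (hv : A (adjoint A v) = b) : μ * ‖adjoint A v‖ ^ 2 ≤ ‖b‖ ^ 2 := by
  have hcs : ‖adjoint A v‖ ^ 2 ≤ ‖b‖ * ‖v‖ := by
    rw [norm_sq_adjoint_apply_eq_inner, hv]
    exact real_inner_le_norm b v
  have hv' : μ * ‖v‖ ≤ ‖b‖ := by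
    rcases (norm_nonneg v).eq_or_lt with h | h
    · rw [← h, mul_zero]; exact norm_nonneg b
    · nlinarith [hPL v]
  nlinarith [norm_nonneg b]

theorem exists_apply_eq_and_mul_norm_sq_le_of_PL [FiniteDimensional ℝ G] (hμ : 0 < μ)
    (hPL : ∀ u, μ * ‖u‖ ^ 2 ≤ ‖adjoint A u‖ ^ 2) (b : G) :
    ∃ w, A w = b ∧ μ * ‖w‖ ^ 2 ≤ ‖b‖ ^ 2 := by
  obtain ⟨v, hv⟩ := exists_apply_adjoint_eq_of_PL hμ hPL b
  exact ⟨adjoint A v, hv, mul_norm_sq_adjoint_le_of_PL hμ hPL hv⟩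

end PolyakLojasiewicz

section LocalModel

variable {n m : ℕ} {F : EuclideanSpace ℝ (Fin n) → EuclideanSpace ℝ (Fin m)}
  {F' : EuclideanSpace ℝ (Fin n) → EuclideanSpace ℝ (Fin n) →L[ℝ] EuclideanSpace ℝ (Fin m)}
  {x w : EuclideanSpace ℝ (Fin n)} {L μ : ℝ}

theorem psi_sub_smul (hw : F' x w = F x) (t : ℝ) :
    psi F F' x L ‖F x‖ (x - t • w)
      = ‖F x‖ / 2 + (1 - t) ^ 2 * ‖F x‖ / 2 + L / 2 * t ^ 2 * ‖w‖ ^ 2 := by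
  have hlin : F x + F' x (x - t • w - x) = (1 - t) • F x := by
    rw [sub_sub_cancel_left, map_neg, map_smul, hw]
    module
  rw [psi, hlin, sub_sub_cancel_left, norm_smul, norm_neg, norm_smul, Real.norm_eq_abs,
    Real.norm_eq_abs, mul_pow, mul_pow, sq_abs, sq_abs]
  field_simp

theorem psi_sub_smul_le (hw : F' x w = F x) (hμ : 0 < μ) (hwμ : μ * ‖w‖ ^ 2 ≤ ‖F x‖ ^ 2)
    (hL : 0 ≤ L) (t : ℝ) :
    psi F F' x L ‖F x‖ (x - t • w)
      ≤ ‖F x‖ / 2 + (1 - t) ^ 2 * ‖F x‖ / 2 + L * t ^ 2 * ‖F x‖ ^ 2 / (2 * μ) := by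
  rw [psi_sub_smul hw]
  have hw' : ‖w‖ ^ 2 ≤ ‖F x‖ ^ 2 / μ := by rwa [le_div_iff₀' hμ]
  calc ‖F x‖ / 2 + (1 - t) ^ 2 * ‖F x‖ / 2 + L / 2 * t ^ 2 * ‖w‖ ^ 2
      ≤ ‖F x‖ / 2 + (1 - t) ^ 2 * ‖F x‖ / 2 + L / 2 * t ^ 2 * (‖F x‖ ^ 2 / μ) := by gcongr
    _ = _ := by ring

end LocalModel

section Scalar

variable {g ε f L μ : ℝ}

theorem le_sub_of_forall_le_quadratic_bound (hμ : 0 < μ) (hf : 0 < f) (hL : 0 < L)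
    (h : ∀ t, g ≤ ε + f / 2 + (1 - t) ^ 2 * f / 2 + L * t ^ 2 * f ^ 2 / (2 * μ)) :
    g ≤ ε + f - μ * f / (2 * (μ + L * f)) := by
  have hpos : 0 < μ + L * f := by positivity
  have heq : (1 - μ / (μ + L * f)) ^ 2 * f / 2 + L * (μ / (μ + L * f)) ^ 2 * f ^ 2 / (2 * μ)
      = f / 2 - μ * f / (2 * (μ + L * f)) := by
    field_simp
    ring
  linarith [h (μ / (μ + L * f))]

theorem decrease_of_forall_le_quadratic_bound {K : ℝ} (hμ : 0 < μ) (hf : 0 < f) (hL : 0 < L)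
    (hLK : L ≤ K)
    (h : ∀ t, g ≤ ε + f / 2 + (1 - t) ^ 2 * f / 2 + L * t ^ 2 * f ^ 2 / (2 * μ)) :
    (f ≤ μ / (2 * K) →
        g ≤ ε + f / 2 + K / (2 * μ) * f ^ 2 ∧ ε + f / 2 + K / (2 * μ) * f ^ 2 ≤ ε + 3 / 4 * f) ∧
      (μ / (2 * K) < f → g ≤ ε + f - μ / (8 * K)) := by
  have hK : 0 < K := hL.trans_le hLK
  refine ⟨fun hsmall => ⟨?_, ?_⟩, fun hlarge => ?_⟩
  · have hLK' : L * f ^ 2 / (2 * μ) ≤ K / (2 * μ) * f ^ 2 := by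
      rw [div_mul_eq_mul_div]; gcongr
    have h1 := h 1
    norm_num at h1
    linarith
  · have hsmall' : f * (2 * K) ≤ μ := (le_div_iff₀ (by positivity)).mp hsmall
    have : K / (2 * μ) * f ^ 2 ≤ f / 4 := by
      rw [div_mul_eq_mul_div, div_le_div_iff₀ (by positivity) (by norm_num)]
      nlinarith
    linarith
  · have hlarge' : μ < f * (2 * K) := (div_lt_iff₀ (by positivity)).mp hlarge
    have : μ / (8 * K) ≤ μ * f / (2 * (μ + L * f)) := by
      rw [div_le_div_iff₀ (by positivity) (by positivity)]
      nlinarith [mul_lt_mul_of_pos_left hlarge' hμ,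
        mul_le_mul_of_nonneg_left hLK (mul_pos hμ hf).le]
    linarith [le_sub_of_forall_le_quadratic_bound hμ hf hL h]

end Scalar

theorem per_iteration_decrease_PL_general
    {n m : ℕ}
    (F : EuclideanSpace ℝ (Fin n) → EuclideanSpace ℝ (Fin m))
    (F' : EuclideanSpace ℝ (Fin n) →
      EuclideanSpace ℝ (Fin n) →L[ℝ] EuclideanSpace ℝ (Fin m))
    (LF : ℝ)
    (μ : ℝ) (hμ : 0 < μ)
    (hPL : ∀ (x : EuclideanSpace ℝ (Fin n)) (u : EuclideanSpace ℝ (Fin m)),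
      μ * ‖u‖ ^ 2 ≤ ‖(ContinuousLinearMap.adjoint (F' x)) u‖ ^ 2)
    (x : EuclideanSpace ℝ (Fin n)) (hfx : 0 < ‖F x‖)
    (ε : ℝ)
    (L : ℝ) (hL0 : 0 < L) (hL : L ≤ 2 * LF)
    (T : EuclideanSpace ℝ (Fin n))
    (hTmin : ∀ y, psi F F' x L ‖F x‖ T ≤ psi F F' x L ‖F x‖ y)
    (xp : EuclideanSpace ℝ (Fin n))
    (hxpε : psi F F' x L ‖F x‖ xp - psi F F' x L ‖F x‖ T ≤ ε)
    (hub : ‖F xp‖ ≤ psi F F' x L ‖F x‖ xp) :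
    ((‖F x‖ ≤ μ / (4 * LF) →
        ‖F xp‖ ≤ ε + ‖F x‖ / 2 + LF / μ * ‖F x‖ ^ 2 ∧
          ε + ‖F x‖ / 2 + LF / μ * ‖F x‖ ^ 2 ≤ ε + 3 / 4 * ‖F x‖) ∧
      (μ / (4 * LF) < ‖F x‖ → ‖F xp‖ ≤ ε + ‖F x‖ - μ / (16 * LF))) ∧
    (L = LF →
      (‖F x‖ ≤ μ / (2 * LF) →
        ‖F xp‖ ≤ ε + ‖F x‖ / 2 + LF / (2 * μ) * ‖F x‖ ^ 2 ∧
          ε + ‖F x‖ / 2 + LF / (2 * μ) * ‖F x‖ ^ 2 ≤ ε + 3 / 4 * ‖F x‖) ∧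
      (μ / (2 * LF) < ‖F x‖ → ‖F xp‖ ≤ ε + ‖F x‖ - μ / (8 * LF))) := by
  obtain ⟨w, hw, hwμ⟩ := exists_apply_eq_and_mul_norm_sq_le_of_PL hμ (hPL x) (F x)
  have hline : ∀ t : ℝ, ‖F xp‖
      ≤ ε + ‖F x‖ / 2 + (1 - t) ^ 2 * ‖F x‖ / 2 + L * t ^ 2 * ‖F x‖ ^ 2 / (2 * μ) := fun t => by
    linarith [hTmin (x - t • w), psi_sub_smul_le hw hμ hwμ hL0.le t]
  refine ⟨?_, fun hLLF => ?_⟩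
  · have h := decrease_of_forall_le_quadratic_bound hμ hfx hL0 hL hline
    rwa [show 2 * (2 * LF) = 4 * LF by ring, show 8 * (2 * LF) = 16 * LF by ring,
      show 2 * LF / (2 * μ) = LF / μ by field_simp] at h
  · exact decrease_of_forall_le_quadratic_bound hμ hfx hL0 hLLF.le hline

/-- **Theorem 3.** Per-iteration decrease under the Polyak–Łojasiewicz condition. -/
theorem per_iteration_decrease_PL
    {n m : ℕ}
    (F : EuclideanSpace ℝ (Fin n) → EuclideanSpace ℝ (Fin m))
    (F' : EuclideanSpace ℝ (Fin n) →
      EuclideanSpace ℝ (Fin n) →L[ℝ] EuclideanSpace ℝ (Fin m))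
    (hF : ∀ x, HasFDerivAt F (F' x) x)
    (LF : ℝ) (hLF : 0 < LF)
    (hLip : ∀ x y, ‖F' y - F' x‖ ≤ LF * ‖y - x‖)
    (μ : ℝ) (hμ : 0 < μ)
    (hPL : ∀ (x : EuclideanSpace ℝ (Fin n)) (u : EuclideanSpace ℝ (Fin m)),
      μ * ‖u‖ ^ 2 ≤ ‖(ContinuousLinearMap.adjoint (F' x)) u‖ ^ 2)
    (x : EuclideanSpace ℝ (Fin n)) (hfx : 0 < ‖F x‖)
    (ε : ℝ) (hε : 0 ≤ ε)
    (L : ℝ) (hL0 : 0 < L) (hL : L ≤ 2 * LF)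
    (T : EuclideanSpace ℝ (Fin n))
    (hTmin : ∀ y, psi F F' x L ‖F x‖ T ≤ psi F F' x L ‖F x‖ y)
    (xp : EuclideanSpace ℝ (Fin n))
    (hxpε : psi F F' x L ‖F x‖ xp - psi F F' x L ‖F x‖ T ≤ ε)
    (hub : ‖F xp‖ ≤ psi F F' x L ‖F x‖ xp) :
    ((‖F x‖ ≤ μ / (4 * LF) →
        ‖F xp‖ ≤ ε + ‖F x‖ / 2 + LF / μ * ‖F x‖ ^ 2 ∧
          ε + ‖F x‖ / 2 + LF / μ * ‖F x‖ ^ 2 ≤ ε + 3 / 4 * ‖F x‖) ∧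
      (μ / (4 * LF) < ‖F x‖ → ‖F xp‖ ≤ ε + ‖F x‖ - μ / (16 * LF))) ∧
    (L = LF →
      (‖F x‖ ≤ μ / (2 * LF) →
        ‖F xp‖ ≤ ε + ‖F x‖ / 2 + LF / (2 * μ) * ‖F x‖ ^ 2 ∧
          ε + ‖F x‖ / 2 + LF / (2 * μ) * ‖F x‖ ^ 2 ≤ ε + 3 / 4 * ‖F x‖) ∧
      (μ / (2 * LF) < ‖F x‖ → ‖F xp‖ ≤ ε + ‖F x‖ - μ / (8 * LF))) :=
  per_iteration_decrease_PL_general F F' LF μ hμ hPL x hfx ε L hL0 hL T hTmin xp hxpε hub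
end

section
/- Let 0 < L ≤ 2L_F, and let a sequence (x_k)_{k≥0} in E₁ and numbers (L_k)_{k≥0} satisfy, for all k ≥ 0: F̂(x_k) ≠ 0, L ≤ L_k ≤ 2L_F, x_{k+1} = T_{L_k, f₁(x_k)}(x_k), and f₁(x_{k+1}) ≤ ψ_{x_k, L_k, f₁(x_k)}(x_{k+1}). Then there exists x* ∈ E₁ with F̂(x*) = 0 and ‖x₀ − x*‖ ≤ 4·f₁(x₀)·√(2L_F/(μ·L)). (Theorem 4: existence of a solution within an explicit distance of the initial point.) -/
open Set Filter Topology RealInnerProductSpace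
open scoped InnerProduct

namespace RegularizedLeastSquares

variable {E G : Type*} [NormedAddCommGroup E] [InnerProductSpace ℝ E] [CompleteSpace E]
  [NormedAddCommGroup G] [InnerProductSpace ℝ G] [CompleteSpace G]
  {A : E →L[ℝ] G} {b : G} {c μ : ℝ} {h : E}

theorem adjoint_apply_eq_of_isMinOn
    (hmin : IsMinOn (fun z => ‖b + A z‖ ^ 2 + c * ‖z‖ ^ 2) univ h) :
    (A†) (b + A h) = -c • h := by
  refine ext_inner_right ℝ fun v => ?_
  rw [ContinuousLinearMap.adjoint_inner_left, real_inner_smul_left, neg_mul, eq_neg_iff_add_eq_zero]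
  -- Along the line `h + s • v` the objective is a quadratic in `s` with minimum at `s = 0`.
  have hquad : ∀ s : ℝ, 0 ≤ (‖A v‖ ^ 2 + c * ‖v‖ ^ 2) * (s * s)
      + 2 * (⟪b + A h, A v⟫ + c * ⟪h, v⟫) * s + 0 := fun s => by
    have := isMinOn_univ_iff.1 hmin (h + s • v)
    simp only [map_add, map_smul, ← add_assoc] at this
    rw [norm_add_sq_real (b + A h), norm_add_sq_real h, inner_smul_right, inner_smul_right,
      norm_smul, norm_smul, mul_pow, mul_pow, Real.norm_eq_abs, sq_abs] at this
    linarith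
  have := discrim_le_zero hquad
  rw [discrim, mul_zero, sub_zero] at this
  simpa using pow_eq_zero_iff two_ne_zero |>.1 (le_antisymm this (sq_nonneg _))

theorem sqrt_mul_norm_le_norm_adjoint_apply (hPL : ∀ u, μ * ‖u‖ ^ 2 ≤ ‖(A†) u‖ ^ 2) (u : G) :
    √μ * ‖u‖ ≤ ‖(A†) u‖ := by
  simpa [Real.sqrt_mul' _ (sq_nonneg _)] using Real.sqrt_le_sqrt (hPL u)

variable (hfoc : (A†) (b + A h) = -c • h)
include hfoc

theorem inner_apply_eq_of_adjoint_apply_eq : ⟪b + A h, A h⟫ = -c * ‖h‖ ^ 2 := by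
  rw [← ContinuousLinearMap.adjoint_inner_left, hfoc, real_inner_smul_left,
    real_inner_self_eq_norm_sq]

theorem norm_sq_eq_of_adjoint_apply_eq :
    ‖b‖ ^ 2 = ‖b + A h‖ ^ 2 + 2 * c * ‖h‖ ^ 2 + ‖A h‖ ^ 2 := by
  have := norm_sub_sq_real (b + A h) (A h)
  rw [add_sub_cancel_right, inner_apply_eq_of_adjoint_apply_eq hfoc] at this
  linarith

theorem sqrt_mul_norm_residual_le (hc : 0 < c)
    (hPL : ∀ u, μ * ‖u‖ ^ 2 ≤ ‖(A†) u‖ ^ 2) : √μ * ‖b + A h‖ ≤ c * ‖h‖ := by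
  simpa [hfoc, norm_smul, abs_of_pos hc] using sqrt_mul_norm_le_norm_adjoint_apply hPL (b + A h)

theorem sqrt_mul_norm_le_norm_apply (hc : 0 < c)
    (hPL : ∀ u, μ * ‖u‖ ^ 2 ≤ ‖(A†) u‖ ^ 2) : √μ * ‖h‖ ≤ ‖A h‖ := by
  have hr := sqrt_mul_norm_residual_le hfoc hc hPL
  have hinner : c * ‖h‖ ^ 2 ≤ ‖b + A h‖ * ‖A h‖ := by
    have := neg_le_of_abs_le (abs_real_inner_le_norm (b + A h) (A h))
    rw [inner_apply_eq_of_adjoint_apply_eq hfoc] at this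
    linarith
  rcases (norm_nonneg h).eq_or_lt with h0 | hpos
  · simp [← h0]
  · refine le_of_mul_le_mul_left ?_ (mul_pos hc hpos)
    nlinarith [mul_le_mul_of_nonneg_right hr (norm_nonneg (A h)), Real.sqrt_nonneg μ]

theorem sqrt_mul_norm_mul_norm_le (hc : 0 < c)
    (hPL : ∀ u, μ * ‖u‖ ^ 2 ≤ ‖(A†) u‖ ^ 2) :
    √μ * ‖b‖ * ‖h‖ ≤ c * ‖h‖ ^ 2 + ‖A h‖ ^ 2 := by
  have hr := sqrt_mul_norm_residual_le hfoc hc hPL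
  have hh := sqrt_mul_norm_le_norm_apply hfoc hc hPL
  have hb : ‖b‖ ≤ ‖b + A h‖ + ‖A h‖ := by
    simpa using norm_sub_le (b + A h) (A h)
  calc √μ * ‖b‖ * ‖h‖ ≤ √μ * (‖b + A h‖ + ‖A h‖) * ‖h‖ := by gcongr
    _ = √μ * ‖b + A h‖ * ‖h‖ + √μ * ‖h‖ * ‖A h‖ := by ring
    _ ≤ c * ‖h‖ * ‖h‖ + ‖A h‖ * ‖A h‖ := by gcongr
    _ = c * ‖h‖ ^ 2 + ‖A h‖ ^ 2 := by ring

theorem regularized_min_le (hμ : 0 ≤ μ) (hc : 0 < c)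
    (hPL : ∀ u, μ * ‖u‖ ^ 2 ≤ ‖(A†) u‖ ^ 2) :
    (μ + c) * (‖b + A h‖ ^ 2 + c * ‖h‖ ^ 2) ≤ c * ‖b‖ ^ 2 := by
  -- The minimal value is `⟪r, b⟫ ≤ ‖r‖ ‖b‖`, and PL bounds it below by `(μ + c) ‖r‖² / c`.
  set r := b + A h
  have hval : ⟪r, b⟫ = ‖r‖ ^ 2 + c * ‖h‖ ^ 2 := by
    have : b = r - A h := by simp [r]
    rw [this, inner_sub_right, real_inner_self_eq_norm_sq,
      inner_apply_eq_of_adjoint_apply_eq hfoc]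
    ring
  have hr : μ * ‖r‖ ^ 2 ≤ c ^ 2 * ‖h‖ ^ 2 := by
    simpa [hfoc, norm_smul, mul_pow] using hPL r
  have hcs := real_inner_le_norm r b
  have hrb : (μ + c) * ‖r‖ ≤ c * ‖b‖ := by
    rcases (norm_nonneg r).eq_or_lt with h0 | hpos
    · rw [← h0, mul_zero]; positivity
    · refine le_of_mul_le_mul_left ?_ hpos
      nlinarith
  calc (μ + c) * (‖r‖ ^ 2 + c * ‖h‖ ^ 2) ≤ (μ + c) * ‖r‖ * ‖b‖ := by
        rw [← hval, mul_assoc]; gcongr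
    _ ≤ c * ‖b‖ * ‖b‖ := by gcongr
    _ = c * ‖b‖ ^ 2 := by ring

end RegularizedLeastSquares

open RegularizedLeastSquares

section LocalModel

variable {n m : ℕ} {F : EuclideanSpace ℝ (Fin n) → EuclideanSpace ℝ (Fin m)}
  {F' : EuclideanSpace ℝ (Fin n) → EuclideanSpace ℝ (Fin n) →L[ℝ] EuclideanSpace ℝ (Fin m)}
  {x y : EuclideanSpace ℝ (Fin n)} {L τ μ : ℝ}

variable (F F' x y L) in
theorem two_mul_mul_psi (hτ : τ ≠ 0) :
    2 * τ * psi F F' x L τ y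
      = τ ^ 2 + (‖F x + F' x (y - x)‖ ^ 2 + τ * L * ‖y - x‖ ^ 2) := by
  unfold psi
  field_simp
  ring

theorem isMinOn_regularized_of_isMinOn_psi (hτ : 0 < τ) (hy : IsMinOn (psi F F' x L τ) univ y) :
    IsMinOn (fun z => ‖F x + F' x z‖ ^ 2 + τ * L * ‖z‖ ^ 2) univ (y - x) :=
  isMinOn_univ_iff.2 fun z => by
    have hle := isMinOn_univ_iff.1 hy (x + z)
    have hy' := two_mul_mul_psi F F' x y L hτ.ne'
    have hz := two_mul_mul_psi F F' x (x + z) L hτ.ne'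
    rw [add_sub_cancel_left] at hz
    nlinarith

variable (hPL : ∀ u, μ * ‖u‖ ^ 2 ≤ ‖((F' x)†) u‖ ^ 2)
  (hFx : F x ≠ 0) (hL : 0 < L) (hy : IsMinOn (psi F F' x L ‖F x‖) univ y)
include hPL hFx hL hy

theorem sqrt_mul_norm_sub_le_of_isMinOn_psi :
    √μ * ‖y - x‖ ≤ 2 * (‖F x‖ - psi F F' x L ‖F x‖ y) := by
  have hT : 0 < ‖F x‖ := norm_pos_iff.2 hFx
  have hfoc := adjoint_apply_eq_of_isMinOn (isMinOn_regularized_of_isMinOn_psi hT hy)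
  have hstep := sqrt_mul_norm_mul_norm_le hfoc (mul_pos hT hL) hPL
  have henergy := norm_sq_eq_of_adjoint_apply_eq hfoc
  have hpsi := two_mul_mul_psi F F' x y L hT.ne'
  -- By the energy identity, `2 ‖F x‖ (‖F x‖ - ψ) = ‖F x‖ L ‖y - x‖² + ‖F' x (y - x)‖²`.
  refine le_of_mul_le_mul_left ?_ hT
  nlinarith

theorem psi_le_of_isMinOn_psi (hμ : 0 ≤ μ) {B : ℝ} (hB : L * ‖F x‖ ≤ B) :
    psi F F' x L ‖F x‖ y ≤ (1 - μ / (2 * (μ + B))) * ‖F x‖ := by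
  have hT : 0 < ‖F x‖ := norm_pos_iff.2 hFx
  have hfoc := adjoint_apply_eq_of_isMinOn (isMinOn_regularized_of_isMinOn_psi hT hy)
  have hmin := regularized_min_le hfoc hμ (mul_pos hT hL) hPL
  have hpsi := two_mul_mul_psi F F' x y L hT.ne'
  have hden : 0 < 2 * ‖F x‖ * (μ + L * ‖F x‖) := by positivity
  have hrhs : 2 * ‖F x‖ * (μ + L * ‖F x‖) * ((1 - μ / (2 * (μ + L * ‖F x‖))) * ‖F x‖)
      = ‖F x‖ ^ 2 * μ + 2 * L * ‖F x‖ ^ 3 := by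
    field_simp
    ring
  calc psi F F' x L ‖F x‖ y ≤ (1 - μ / (2 * (μ + L * ‖F x‖))) * ‖F x‖ := by
        refine le_of_mul_le_mul_left ?_ hden
        rw [hrhs]
        nlinarith
    _ ≤ (1 - μ / (2 * (μ + B))) * ‖F x‖ := by gcongr

end LocalModel

theorem exists_tendsto_dist_le_of_dist_le_sub {X : Type*} [PseudoMetricSpace X] [CompleteSpace X]
    {x : ℕ → X} {f : ℕ → ℝ} (hf : ∀ k, 0 ≤ f k)
    (hx : ∀ k, dist (x k) (x (k + 1)) ≤ f k - f (k + 1)) :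
    ∃ a, Tendsto x atTop (𝓝 a) ∧ dist (x 0) a ≤ f 0 := by
  have hsum : ∀ N, ∑ i ∈ Finset.range N, dist (x i) (x (i + 1)) ≤ f 0 :=
    fun N => (Finset.sum_le_sum fun i _ => hx i).trans
      ((Finset.sum_range_sub' f N).trans_le (sub_le_self _ (hf N)))
  obtain ⟨a, ha⟩ := cauchySeq_tendsto_of_complete
    (cauchySeq_of_summable_dist (summable_of_sum_range_le (fun _ => dist_nonneg) hsum))
  exact ⟨a, ha, le_of_tendsto' (tendsto_const_nhds.dist ha)
    fun N => (dist_le_range_sum_dist x N).trans (hsum N)⟩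

theorem tendsto_zero_of_succ_le_mul {f : ℕ → ℝ} {ρ : ℝ} (hf : ∀ k, 0 ≤ f k) (hρ₀ : 0 ≤ ρ)
    (hρ₁ : ρ < 1) (h : ∀ k, f (k + 1) ≤ ρ * f k) : Tendsto f atTop (𝓝 0) :=
  squeeze_zero hf (fun k => le_geom hρ₀ k fun j _ => h j)
    (by simpa using (tendsto_pow_atTop_nhds_zero_of_lt_one hρ₀ hρ₁).mul_const (f 0))

theorem two_div_sqrt_le_four_mul_sqrt {μ L LF : ℝ} (hμ : 0 < μ) (hL0 : 0 < L) (hL : L ≤ 2 * LF) :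
    2 / √μ ≤ 4 * √(2 * LF / (μ * L)) := by
  have h : √(1 / μ) ≤ √(2 * LF / (μ * L)) := Real.sqrt_le_sqrt <| by
    rw [div_le_div_iff₀ hμ (by positivity)]
    nlinarith
  rw [Real.sqrt_div' _ hμ.le, Real.sqrt_one] at h
  rw [div_eq_mul_one_div 2]
  linarith [Real.sqrt_nonneg (2 * LF / (μ * L))]

theorem solution_within_explicit_distance_general
    {n m : ℕ}
    (F : EuclideanSpace ℝ (Fin n) → EuclideanSpace ℝ (Fin m))
    (F' : EuclideanSpace ℝ (Fin n) →
      EuclideanSpace ℝ (Fin n) →L[ℝ] EuclideanSpace ℝ (Fin m))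
    (hF : ∀ x, HasFDerivAt F (F' x) x)
    (LF : ℝ)
    (μ : ℝ) (hμ : 0 < μ)
    (hPL : ∀ (x : EuclideanSpace ℝ (Fin n)) (u : EuclideanSpace ℝ (Fin m)),
      μ * ‖u‖ ^ 2 ≤ ‖(ContinuousLinearMap.adjoint (F' x)) u‖ ^ 2)
    (T : ℝ → ℝ → EuclideanSpace ℝ (Fin n) → EuclideanSpace ℝ (Fin n))
    (hT : ∀ L τ x, 0 < L → 0 < τ → ∀ y, psi F F' x L τ (T L τ x) ≤ psi F F' x L τ y)
    (L : ℝ) (hL0 : 0 < L) (hL : L ≤ 2 * LF)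
    (x : ℕ → EuclideanSpace ℝ (Fin n)) (Lk : ℕ → ℝ)
    (hne : ∀ k, F (x k) ≠ 0)
    (hLk : ∀ k, L ≤ Lk k ∧ Lk k ≤ 2 * LF)
    (hstep : ∀ k, x (k + 1) = T (Lk k) ‖F (x k)‖ (x k))
    (hub : ∀ k, ‖F (x (k + 1))‖ ≤ psi F F' (x k) (Lk k) ‖F (x k)‖ (x (k + 1))) :
    ∃ xstar : EuclideanSpace ℝ (Fin n),
      F xstar = 0 ∧ ‖x 0 - xstar‖ ≤ 4 * ‖F (x 0)‖ * Real.sqrt (2 * LF / (μ * L)) := by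
  have hLkpos k : 0 < Lk k := hL0.trans_le (hLk k).1
  have hmin k : IsMinOn (psi F F' (x k) (Lk k) ‖F (x k)‖) univ (x (k + 1)) :=
    isMinOn_univ_iff.2 fun y => hstep k ▸ hT _ _ _ (hLkpos k) (norm_pos_iff.2 (hne k)) y
  have hdesc k : √μ * ‖x (k + 1) - x k‖ ≤ 2 * (‖F (x k)‖ - ‖F (x (k + 1))‖) := by
    linarith [sqrt_mul_norm_sub_le_of_isMinOn_psi (hPL _) (hne k) (hLkpos k) (hmin k), hub k]
  have hanti : Antitone fun k => ‖F (x k)‖ := antitone_nat_of_succ_le fun k => by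
    nlinarith [hdesc k, mul_nonneg (Real.sqrt_nonneg μ) (norm_nonneg (x (k + 1) - x k))]
  set B := 2 * LF * ‖F (x 0)‖
  have hB : 0 ≤ B := mul_nonneg (by linarith) (norm_nonneg _)
  have hrate k : ‖F (x (k + 1))‖ ≤ (1 - μ / (2 * (μ + B))) * ‖F (x k)‖ :=
    (hub k).trans <| psi_le_of_isMinOn_psi (hPL _) (hne k) (hLkpos k) (hmin k) hμ.le <|
      mul_le_mul (hLk k).2 (hanti (Nat.zero_le k)) (norm_nonneg _) (by linarith)
  obtain ⟨xstar, hlim, hdist⟩ := exists_tendsto_dist_le_of_dist_le_sub (x := x)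
    (f := fun k => 2 / √μ * ‖F (x k)‖) (fun k => by positivity) fun k => by
      rw [dist_comm, dist_eq_norm, ← mul_sub, div_mul_eq_mul_div, le_div_iff₀ (by positivity)]
      linarith [hdesc k]
  refine ⟨xstar, tendsto_nhds_unique ((hF xstar).continuousAt.tendsto.comp hlim) ?_, ?_⟩
  · have hρ₀ : μ / (2 * (μ + B)) ≤ 1 := by
      rw [div_le_one (by positivity)]
      linarith
    have hρ₁ : 0 < μ / (2 * (μ + B)) := by positivity
    exact tendsto_zero_iff_norm_tendsto_zero.2 <| tendsto_zero_of_succ_le_mul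
      (fun _ => norm_nonneg _) (by linarith) (by linarith) hrate
  · calc ‖x 0 - xstar‖ = dist (x 0) xstar := (dist_eq_norm _ _).symm
      _ ≤ 2 / √μ * ‖F (x 0)‖ := hdist
      _ ≤ 4 * √(2 * LF / (μ * L)) * ‖F (x 0)‖ := by
        gcongr
        exact two_div_sqrt_le_four_mul_sqrt hμ hL0 hL
      _ = 4 * ‖F (x 0)‖ * √(2 * LF / (μ * L)) := by ring

/-- **Theorem 4.** Existence of a solution of `F̂(x) = 0` within an explicit distance of the
initial point, for the exact normalized-squares iteration under the PL condition.
`T L τ x` is characterized as the minimizer of `ψ_{x,L,τ}` over `E₁`. -/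
theorem solution_within_explicit_distance
    {n m : ℕ}
    (F : EuclideanSpace ℝ (Fin n) → EuclideanSpace ℝ (Fin m))
    (F' : EuclideanSpace ℝ (Fin n) →
      EuclideanSpace ℝ (Fin n) →L[ℝ] EuclideanSpace ℝ (Fin m))
    (hF : ∀ x, HasFDerivAt F (F' x) x)
    (LF : ℝ) (hLF : 0 < LF)
    (hLip : ∀ x y, ‖F' y - F' x‖ ≤ LF * ‖y - x‖)
    (μ : ℝ) (hμ : 0 < μ)
    (hPL : ∀ (x : EuclideanSpace ℝ (Fin n)) (u : EuclideanSpace ℝ (Fin m)),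
      μ * ‖u‖ ^ 2 ≤ ‖(ContinuousLinearMap.adjoint (F' x)) u‖ ^ 2)
    (T : ℝ → ℝ → EuclideanSpace ℝ (Fin n) → EuclideanSpace ℝ (Fin n))
    (hT : ∀ L τ x, 0 < L → 0 < τ → ∀ y, psi F F' x L τ (T L τ x) ≤ psi F F' x L τ y)
    (L : ℝ) (hL0 : 0 < L) (hL : L ≤ 2 * LF)
    (x : ℕ → EuclideanSpace ℝ (Fin n)) (Lk : ℕ → ℝ)
    (hne : ∀ k, F (x k) ≠ 0)
    (hLk : ∀ k, L ≤ Lk k ∧ Lk k ≤ 2 * LF)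
    (hstep : ∀ k, x (k + 1) = T (Lk k) ‖F (x k)‖ (x k))
    (hub : ∀ k, ‖F (x (k + 1))‖ ≤ psi F F' (x k) (Lk k) ‖F (x k)‖ (x (k + 1))) :
    ∃ xstar : EuclideanSpace ℝ (Fin n),
      F xstar = 0 ∧ ‖x 0 - xstar‖ ≤ 4 * ‖F (x 0)‖ * Real.sqrt (2 * LF / (μ * L)) :=
  solution_within_explicit_distance_general F F' hF LF μ hμ hPL T hT L hL0 hL x Lk hne hLk hstep hub
end

section
/- Let (x_k)_{k≥0} ⊆ E₁ and numbers L_k > 0, η_k ∈ (0,2), τ_k > 0, c_k, α_k satisfy for all k ≥ 0: f₁(x_k) > 0, x_{k+1} = x_k − η_k·(F̂'(x_k)*F̂'(x_k) + τ_kL_k·I)⁻¹F̂'(x_k)*F̂(x_k), f₁(x_{k+1}) ≤ ψ_{x_k,L_k,τ_k}(x_{k+1}), τ_k = c_k·f₁(x_k), α_k ∈ [ 1/2 + (L_k·f₁(x_k) + (1−η_k)²μ)/(2(L_k·f₁(x_k) + μ)), 1 ), and c_k ∈ [ (L_k·f₁(x_k) + (1−η_k)²μ)/((2α_k − 1)(L_k·f₁(x_k)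 + μ)), α_k − 1/2 − μ/(2L_k·f₁(x_k)) + √( α_k² + α_k·(μ/(L_k·f₁(x_k)) − 1) + (1/4)·(μ/(L_k·f₁(x_k)) + 1)² − (1−η_k)²μ/(L_k·f₁(x_k)) ) ]. Then for every k ≥ 0, f₁(x_k) ≤ f₁(x₀)·∏_{i=0}^{k−1} α_i, where the empty product equals 1. (Theorem 7: globally linear convergence of the normalized-squares method with τ_k proportional to f₁(x_k).) -/
open scoped InnerProduct RealInnerProductSpace

section NormalEquation

variable {E G : Type*} [NormedAddCommGroup E] [InnerProductSpace ℝ E] [CompleteSpace E]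
  [NormedAddCommGroup G] [InnerProductSpace ℝ G] [CompleteSpace G]
  {A : E →L[ℝ] G} {g : G} {d : E} {t : ℝ}

lemma adjoint_sub_apply_eq_smul (hd : (A†) (A d) + t • d = (A†) g) :
    (A†) (g - A d) = t • d := by
  rw [map_sub, ← hd, add_sub_cancel_left]

lemma inner_apply_sub_apply_eq (hd : (A†) (A d) + t • d = (A†) g) :
    ⟪A d, g - A d⟫ = t * ‖d‖ ^ 2 := by
  rw [real_inner_comm, ← ContinuousLinearMap.adjoint_inner_left, adjoint_sub_apply_eq_smul hd,
    real_inner_smul_left, real_inner_self_eq_norm_sq]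

lemma norm_sq_eq_of_normal_eq (hd : (A†) (A d) + t • d = (A†) g) :
    ‖g‖ ^ 2 = ‖A d‖ ^ 2 + 2 * t * ‖d‖ ^ 2 + ‖g - A d‖ ^ 2 := by
  have h := norm_add_sq_real (A d) (g - A d)
  rw [add_sub_cancel, inner_apply_sub_apply_eq hd] at h
  rw [h]; ring

lemma norm_sub_smul_sq_add_of_normal_eq (hd : (A†) (A d) + t • d = (A†) g) (η : ℝ) :
    ‖g - η • A d‖ ^ 2 + t * ‖η • d‖ ^ 2
      = ‖g‖ ^ 2 - (1 - (1 - η) ^ 2) * (‖A d‖ ^ 2 + t * ‖d‖ ^ 2) := by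
  have hinner : ⟪g, A d⟫ = ‖A d‖ ^ 2 + t * ‖d‖ ^ 2 := by
    rw [← inner_apply_sub_apply_eq hd, ← real_inner_self_eq_norm_sq, ← inner_add_right,
      add_sub_cancel, real_inner_comm]
  rw [norm_sub_sq_real, real_inner_smul_right, hinner, norm_smul, norm_smul, mul_pow, mul_pow,
    Real.norm_eq_abs, sq_abs]
  ring

lemma mul_norm_sq_le_norm_apply_sq_of_adjoint_eq {μ : ℝ} (hμ : 0 ≤ μ)
    (hPL : ∀ w, μ * ‖w‖ ^ 2 ≤ ‖(A†) w‖ ^ 2) {v : E} {w : G} (hw : (A†) w = v) :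
    μ * ‖v‖ ^ 2 ≤ ‖A v‖ ^ 2 := by
  rcases (norm_nonneg v).eq_or_lt with hv | hv
  · rw [← hv]; simp
  have hcs : ‖v‖ ^ 2 ≤ ‖w‖ * ‖A v‖ := by
    rw [← real_inner_self_eq_norm_sq, ← hw, ContinuousLinearMap.adjoint_inner_left, hw]
    exact real_inner_le_norm w (A v)
  have hw2 : μ * ‖w‖ ^ 2 ≤ ‖v‖ ^ 2 := hw ▸ hPL w
  have hsq : ‖v‖ ^ 2 * (μ * ‖v‖ ^ 2) ≤ ‖v‖ ^ 2 * ‖A v‖ ^ 2 :=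
    calc ‖v‖ ^ 2 * (μ * ‖v‖ ^ 2) = μ * (‖v‖ ^ 2) ^ 2 := by ring
      _ ≤ μ * (‖w‖ * ‖A v‖) ^ 2 := by gcongr
      _ = μ * ‖w‖ ^ 2 * ‖A v‖ ^ 2 := by ring
      _ ≤ ‖v‖ ^ 2 * ‖A v‖ ^ 2 := by gcongr
  exact le_of_mul_le_mul_left hsq (by positivity)

lemma mul_norm_sq_le_of_normal_eq {μ : ℝ} (hμ : 0 ≤ μ) (hPL : ∀ w, μ * ‖w‖ ^ 2 ≤ ‖(A†) w‖ ^ 2)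
    (ht : 0 < t) (hd : (A†) (A d) + t • d = (A†) g) :
    μ * ‖g‖ ^ 2 ≤ (μ + t) * (‖A d‖ ^ 2 + t * ‖d‖ ^ 2) := by
  have hres := adjoint_sub_apply_eq_smul hd
  have hdA : μ * ‖d‖ ^ 2 ≤ ‖A d‖ ^ 2 :=
    mul_norm_sq_le_norm_apply_sq_of_adjoint_eq hμ hPL (w := t⁻¹ • (g - A d))
      (by rw [map_smul, hres, smul_smul, inv_mul_cancel₀ ht.ne', one_smul])
  have hres_le : μ * ‖g - A d‖ ^ 2 ≤ t ^ 2 * ‖d‖ ^ 2 := by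
    simpa [hres, norm_smul, mul_pow, ht.le] using hPL (g - A d)
  rw [norm_sq_eq_of_normal_eq hd]
  nlinarith [mul_le_mul_of_nonneg_left hdA ht.le]

end NormalEquation

lemma sq_sub_two_mul_le_of_le_add_sqrt {γ δ c : ℝ} (hδ : 0 ≤ δ) (hc : 0 ≤ c)
    (h : c ≤ γ + √(γ ^ 2 + δ)) : c ^ 2 - 2 * γ * c ≤ δ := by
  rcases le_total γ c with hγc | hcγ
  · have : (c - γ) ^ 2 ≤ √(γ ^ 2 + δ) ^ 2 := by gcongr; linarith
    rw [Real.sq_sqrt (by positivity)] at this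
    linarith
  · nlinarith

lemma cubic_le_of_linear_and_quadratic_bounds {l μ e α c : ℝ} (hl : 0 ≤ l) (hμ : 0 ≤ μ)
    (he : 0 ≤ e) (hα : α ≤ 1) (hc : 0 ≤ c)
    (hlin : l + e * μ ≤ c * ((2 * α - 1) * (l + μ)))
    (hquad : l * c ^ 2 + (μ - (2 * α - 1) * l) * c ≤ (2 * α - e) * μ) :
    (1 + c ^ 2 - 2 * c * α) * (μ + c * l) ≤ (1 - e) * μ := by
  -- LHS - RHS equals both `-(1 - c)(cμ + l(1 + c² - (2α - 1)c)) - (slack of hlin)` and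
  -- `-c (slack of hquad) - (c - 1)(lc + eμ)`: the first settles `c ≤ 1`, the second `c ≥ 1`.
  rcases le_total c 1 with hc1 | hc1
  · have hW : 0 ≤ c * μ + l * (1 + c ^ 2 - c * (2 * α - 1)) := by
      have : 0 ≤ 1 + c ^ 2 - c * (2 * α - 1) := by nlinarith
      positivity
    nlinarith [mul_nonneg (sub_nonneg.2 hc1) hW]
  · nlinarith [mul_nonneg (sub_nonneg.2 hc1) (by positivity : 0 ≤ l * c + e * μ)]

lemma cubic_le_of_stepsize_bounds {l μ η α c : ℝ} (hl : 0 < l) (hμ : 0 < μ)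
    (hη : η ∈ Set.Ioo (0 : ℝ) 2)
    (hα : α ∈ Set.Ico (1 / 2 + (l + (1 - η) ^ 2 * μ) / (2 * (l + μ))) 1)
    (hc : c ∈ Set.Icc ((l + (1 - η) ^ 2 * μ) / ((2 * α - 1) * (l + μ)))
      (α - 1 / 2 - μ / (2 * l) + √(α ^ 2 + α * (μ / l - 1) + 1 / 4 * (μ / l + 1) ^ 2
        - (1 - η) ^ 2 * μ / l))) :
    (1 + c ^ 2 - 2 * c * α) * (μ + c * l) ≤ (1 - (1 - η) ^ 2) * μ := by
  set e := (1 - η) ^ 2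
  have he1 : e ≤ 1 := by nlinarith [hη.1, hη.2]
  have hα_half : 1 / 2 < α := by
    have : 0 < (l + e * μ) / (2 * (l + μ)) := by positivity
    linarith [hα.1]
  have hden : 0 < (2 * α - 1) * (l + μ) := by nlinarith
  have hlin : l + e * μ ≤ c * ((2 * α - 1) * (l + μ)) := (div_le_iff₀ hden).1 hc.1
  have hc0 : 0 ≤ c := le_trans (by positivity) hc.1
  have hquad : l * c ^ 2 + (μ - (2 * α - 1) * l) * c ≤ (2 * α - e) * μ := by
    have hrad : α ^ 2 + α * (μ / l - 1) + 1 / 4 * (μ / l + 1) ^ 2 - e * μ / l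
        = (α - 1 / 2 - μ / (2 * l)) ^ 2 + (2 * α - e) * μ / l := by
      field_simp; ring
    have hδ : 0 ≤ (2 * α - e) * μ / l := by
      have : 0 ≤ 2 * α - e := by linarith
      positivity
    have h := sq_sub_two_mul_le_of_le_add_sqrt hδ hc0 (hrad ▸ hc.2)
    rw [le_div_iff₀ hl] at h
    have : (c ^ 2 - 2 * (α - 1 / 2 - μ / (2 * l)) * c) * l
        = l * c ^ 2 + (μ - (2 * α - 1) * l) * c := by field_simp; ring
    linarith
  exact cubic_le_of_linear_and_quadratic_bounds hl.le hμ.le (sq_nonneg _) hα.2.le hc0 hlin hquad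

lemma le_mul_prod_range_of_le_mul {R : Type*} [CommSemiring R] [PartialOrder R] [IsOrderedRing R]
    {a r : ℕ → R} (hr : ∀ k, 0 ≤ r k) (h : ∀ k, a (k + 1) ≤ r k * a k) (k : ℕ) :
    a k ≤ a 0 * ∏ i ∈ Finset.range k, r i := by
  induction k with
  | zero => simp
  | succ k ih =>
    calc a (k + 1) ≤ r k * a k := h k
      _ ≤ r k * (a 0 * ∏ i ∈ Finset.range k, r i) := by gcongr; exact hr k
      _ = a 0 * ∏ i ∈ Finset.range (k + 1), r i := by rw [Finset.prod_range_succ]; ring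

section RegularizedStep

variable {n m : ℕ} (F : EuclideanSpace ℝ (Fin n) → EuclideanSpace ℝ (Fin m))
  (F' : EuclideanSpace ℝ (Fin n) → EuclideanSpace ℝ (Fin n) →L[ℝ] EuclideanSpace ℝ (Fin m))
  {x d : EuclideanSpace ℝ (Fin n)} {L τ η : ℝ}

lemma two_mul_psi_sub_smul_eq (hτ : τ ≠ 0)
    (hd : (F' x†) (F' x d) + (τ * L) • d = (F' x†) (F x)) :
    2 * τ * psi F F' x L τ (x - η • d)
      = τ ^ 2 + ‖F x‖ ^ 2 - (1 - (1 - η) ^ 2) * (‖F' x d‖ ^ 2 + τ * L * ‖d‖ ^ 2) := by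
  rw [add_sub_assoc, ← norm_sub_smul_sq_add_of_normal_eq hd η, psi, sub_sub_cancel_left, map_neg,
    map_smul, norm_neg, ← sub_eq_add_neg]
  field_simp
  ring

lemma norm_sub_smul_le_mul_of_psi_bound {μ c α : ℝ} (hμ : 0 < μ)
    (hPL : ∀ u, μ * ‖u‖ ^ 2 ≤ ‖(F' x†) u‖ ^ 2)
    (hf : 0 < ‖F x‖) (hL : 0 < L) (hη : η ∈ Set.Ioo (0 : ℝ) 2) (hτ : 0 < τ)
    (hd : (F' x†) (F' x d) + (τ * L) • d = (F' x†) (F x))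
    (hub : ‖F (x - η • d)‖ ≤ psi F F' x L τ (x - η • d))
    (hτc : τ = c * ‖F x‖)
    (hα : α ∈ Set.Ico (1 / 2 + (L * ‖F x‖ + (1 - η) ^ 2 * μ) / (2 * (L * ‖F x‖ + μ))) 1)
    (hc : c ∈ Set.Icc ((L * ‖F x‖ + (1 - η) ^ 2 * μ) / ((2 * α - 1) * (L * ‖F x‖ + μ)))
      (α - 1 / 2 - μ / (2 * L * ‖F x‖) + √(α ^ 2 + α * (μ / (L * ‖F x‖) - 1)
        + 1 / 4 * (μ / (L * ‖F x‖) + 1) ^ 2 - (1 - η) ^ 2 * μ / (L * ‖F x‖)))) :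
    ‖F (x - η • d)‖ ≤ α * ‖F x‖ := by
  have hmodel := two_mul_psi_sub_smul_eq F F' (η := η) hτ.ne' hd
  set f := ‖F x‖
  set s := ‖F' x d‖ ^ 2 + τ * L * ‖d‖ ^ 2
  rw [mul_assoc] at hc
  have hcubic := cubic_le_of_stepsize_bounds (mul_pos hL hf) hμ hη hα hc
  have hdecrease : μ * f ^ 2 ≤ (μ + τ * L) * s :=
    mul_norm_sq_le_of_normal_eq hμ.le hPL (by positivity) hd
  have hgain : 0 ≤ 1 - (1 - η) ^ 2 := by nlinarith [hη.1, hη.2]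
  have hs : 0 ≤ s := by positivity
  have hτL : τ * L = c * (L * f) := by rw [hτc]; ring
  suffices (1 + c ^ 2 - 2 * c * α) * f ^ 2 ≤ (1 - (1 - η) ^ 2) * s by
    refine hub.trans (le_of_mul_le_mul_left ?_ (by positivity : 0 < 2 * τ))
    rw [hmodel, hτc]
    linarith
  rcases le_total (1 + c ^ 2 - 2 * c * α) 0 with hneg | hpos
  · nlinarith [mul_nonneg hgain hs]
  · rw [hτL] at hdecrease
    refine le_of_mul_le_mul_left ?_ hμ
    nlinarith [mul_le_mul_of_nonneg_left hdecrease hpos, mul_le_mul_of_nonneg_right hcubic hs]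

end RegularizedStep

theorem globally_linear_convergence_general
    {n m : ℕ}
    (F : EuclideanSpace ℝ (Fin n) → EuclideanSpace ℝ (Fin m))
    (F' : EuclideanSpace ℝ (Fin n) →
      EuclideanSpace ℝ (Fin n) →L[ℝ] EuclideanSpace ℝ (Fin m))
    (μ : ℝ) (hμ : 0 < μ)
    (hPL : ∀ (x : EuclideanSpace ℝ (Fin n)) (u : EuclideanSpace ℝ (Fin m)),
      μ * ‖u‖ ^ 2 ≤ ‖(ContinuousLinearMap.adjoint (F' x)) u‖ ^ 2)
    (x : ℕ → EuclideanSpace ℝ (Fin n))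
    (Lk ηk τk ck αk : ℕ → ℝ) (d : ℕ → EuclideanSpace ℝ (Fin n))
    (hfx : ∀ k, 0 < ‖F (x k)‖)
    (hLk : ∀ k, 0 < Lk k)
    (hηk : ∀ k, ηk k ∈ Set.Ioo (0 : ℝ) 2)
    (hτk : ∀ k, 0 < τk k)
    (hd : ∀ k, (ContinuousLinearMap.adjoint (F' (x k))) (F' (x k) (d k))
        + (τk k * Lk k) • d k = (ContinuousLinearMap.adjoint (F' (x k))) (F (x k)))
    (hstep : ∀ k, x (k + 1) = x k - ηk k • d k)
    (hub : ∀ k, ‖F (x (k + 1))‖ ≤ psi F F' (x k) (Lk k) (τk k) (x (k + 1)))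
    (hτc : ∀ k, τk k = ck k * ‖F (x k)‖)
    (hα : ∀ k, αk k ∈ Set.Ico
        (1 / 2 + (Lk k * ‖F (x k)‖ + (1 - ηk k) ^ 2 * μ)
          / (2 * (Lk k * ‖F (x k)‖ + μ))) 1)
    (hc : ∀ k, ck k ∈ Set.Icc
        ((Lk k * ‖F (x k)‖ + (1 - ηk k) ^ 2 * μ)
          / ((2 * αk k - 1) * (Lk k * ‖F (x k)‖ + μ)))
        (αk k - 1 / 2 - μ / (2 * Lk k * ‖F (x k)‖)
          + Real.sqrt ((αk k) ^ 2 + αk k * (μ / (Lk k * ‖F (x k)‖) - 1)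
            + 1 / 4 * (μ / (Lk k * ‖F (x k)‖) + 1) ^ 2
            - (1 - ηk k) ^ 2 * μ / (Lk k * ‖F (x k)‖)))) :
    ∀ k, ‖F (x k)‖ ≤ ‖F (x 0)‖ * ∏ i ∈ Finset.range k, αk i := by
  have hcontract : ∀ k, ‖F (x (k + 1))‖ ≤ αk k * ‖F (x k)‖ := fun k => by
    have hub_k := hub k
    rw [hstep k] at hub_k ⊢
    exact norm_sub_smul_le_mul_of_psi_bound F F' hμ (hPL (x k)) (hfx k) (hLk k) (hηk k) (hτk k)
      (hd k) hub_k (hτc k) (hα k) (hc k)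
  have hα_nonneg : ∀ k, 0 ≤ αk k := fun k => by
    have := hLk k
    have := hfx k
    exact le_trans (by positivity) (hα k).1
  exact le_mul_prod_range_of_le_mul hα_nonneg hcontract

/-- **Theorem 7.** Globally linear convergence of the normalized-squares method with
`τ_k` proportional to `f₁(x_k)`; the step `x_{k+1} = x_k − η_k (F̂'(x_k)*F̂'(x_k) + τ_kL_k I)⁻¹
F̂'(x_k)* F̂(x_k)` is encoded through vectors `d k`. -/
theorem globally_linear_convergence
    {n m : ℕ}
    (F : EuclideanSpace ℝ (Fin n) → EuclideanSpace ℝ (Fin m))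
    (F' : EuclideanSpace ℝ (Fin n) →
      EuclideanSpace ℝ (Fin n) →L[ℝ] EuclideanSpace ℝ (Fin m))
    (hF : ∀ x, HasFDerivAt F (F' x) x)
    (LF : ℝ) (hLF : 0 < LF)
    (hLip : ∀ x y, ‖F' y - F' x‖ ≤ LF * ‖y - x‖)
    (μ : ℝ) (hμ : 0 < μ)
    (hPL : ∀ (x : EuclideanSpace ℝ (Fin n)) (u : EuclideanSpace ℝ (Fin m)),
      μ * ‖u‖ ^ 2 ≤ ‖(ContinuousLinearMap.adjoint (F' x)) u‖ ^ 2)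
    (x : ℕ → EuclideanSpace ℝ (Fin n))
    (Lk ηk τk ck αk : ℕ → ℝ) (d : ℕ → EuclideanSpace ℝ (Fin n))
    (hfx : ∀ k, 0 < ‖F (x k)‖)
    (hLk : ∀ k, 0 < Lk k)
    (hηk : ∀ k, ηk k ∈ Set.Ioo (0 : ℝ) 2)
    (hτk : ∀ k, 0 < τk k)
    (hd : ∀ k, (ContinuousLinearMap.adjoint (F' (x k))) (F' (x k) (d k))
        + (τk k * Lk k) • d k = (ContinuousLinearMap.adjoint (F' (x k))) (F (x k)))
    (hstep : ∀ k, x (k + 1) = x k - ηk k • d k)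
    (hub : ∀ k, ‖F (x (k + 1))‖ ≤ psi F F' (x k) (Lk k) (τk k) (x (k + 1)))
    (hτc : ∀ k, τk k = ck k * ‖F (x k)‖)
    (hα : ∀ k, αk k ∈ Set.Ico
        (1 / 2 + (Lk k * ‖F (x k)‖ + (1 - ηk k) ^ 2 * μ)
          / (2 * (Lk k * ‖F (x k)‖ + μ))) 1)
    (hc : ∀ k, ck k ∈ Set.Icc
        ((Lk k * ‖F (x k)‖ + (1 - ηk k) ^ 2 * μ)
          / ((2 * αk k - 1) * (Lk k * ‖F (x k)‖ + μ)))
        (αk k - 1 / 2 - μ / (2 * Lk k * ‖F (x k)‖)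
          + Real.sqrt ((αk k) ^ 2 + αk k * (μ / (Lk k * ‖F (x k)‖) - 1)
            + 1 / 4 * (μ / (Lk k * ‖F (x k)‖) + 1) ^ 2
            - (1 - ηk k) ^ 2 * μ / (Lk k * ‖F (x k)‖)))) :
    ∀ k, ‖F (x k)‖ ≤ ‖F (x 0)‖ * ∏ i ∈ Finset.range k, αk i :=
  globally_linear_convergence_general F F' μ hμ hPL x Lk ηk τk ck αk d hfx hLk hηk hτk hd hstep hub
    hτc hα hc
end

section
/- Let L ∈ (0, L_F], ε ≥ 0, let k ≥ 1 be an integer and r > 0. Suppose points x₀, …, x_k ∈ E₁ and numbers L₀, …, L_{k−1} and τ₀*, …, τ_{k−1}* > 0 satisfy, for every 0 ≤ i < k: L ≤ L_i ≤ 2L_F, ψ_{x_i,L_i,τ_i*}(x_{i+1}) ≤ ε + inf_{y ∈ E₁}( φ(x_i,y) + (L_i/2)·‖y − x_i‖² ), f₁(x_i) ≥ ψ_{x_i,L_i,τ_i*}(x_{i+1}), and f₁(x_{i+1}) ≤ ψ_{x_i,L_i,τ_i*}(x_{i+1}). Then (8L_F²/L)·( ε + (f₁(x₀) − f₁(x_k))/k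 ) ≥ min_{0≤i<k} ‖2L_F·(S_{2L_F}(x_i) − x_i)‖², and L_F·( ε + (f₁(x₀) − f₁(x_k))/k ) ≥ min_{0≤i<k} 2·(L_F·r)²·κ( Δ̃_r(x_i)/(2L_F·r²) ). (Theorem 8: global sublinear convergence with adaptively chosen τ.) -/
/-- `Δ̃_r(x) = f₁(x) − inf {φ(x,y) : ‖y − x‖ ≤ r}`. -/
noncomputable def DeltaTilde {n m : ℕ}
    (F : EuclideanSpace ℝ (Fin n) → EuclideanSpace ℝ (Fin m))
    (F' : EuclideanSpace ℝ (Fin n) →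
      EuclideanSpace ℝ (Fin n) →L[ℝ] EuclideanSpace ℝ (Fin m))
    (r : ℝ) (x : EuclideanSpace ℝ (Fin n)) : ℝ :=
  ‖F x‖ - sInf ((fun y => ‖F x + F' x (y - x)‖) '' Metric.closedBall x r)

/-! Write `Δ(x) = ‖F x‖ - ⨅ y, (φ(x,y) + L_F‖y - x‖²)`. The acceptance tests give
`‖F x_{i+1}‖ ≤ ε + ⨅ y, (φ(x_i,y) + (L_i/2)‖y - x_i‖²)`, and as `L_i/2 ≤ L_F` this yields
`Δ(x_i) ≤ ε + ‖F x_i‖ - ‖F x_{i+1}‖`; telescoping bounds the least `Δ(x_i)` by the average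
`ε + (‖F x₀‖ - ‖F x_k‖)/k`. Both stationarity measures are controlled by `Δ` through convexity of
`φ(x,·)`: the prox point with parameter `2L_F` satisfies `‖2L_F(S x - x)‖² ≤ 4L_F Δ(x)`, and moving
a fraction `θ` of the way towards a near-optimal point of the ball of radius `r` gives
`2L_F r² κ(Δ̃_r(x)/(2L_F r²)) ≤ Δ(x)`. -/

open Set Filter Topology

lemma le_of_forall_mem_Ioc_le_add_mul {a b c : ℝ} (h : ∀ t ∈ Ioc (0 : ℝ) 1, a ≤ c + t * b) :
    a ≤ c := by
  have hlim : Tendsto (fun t => c + t * b) (𝓝[>] 0) (𝓝 c) := by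
    have : Continuous fun t : ℝ => c + t * b := by fun_prop
    simpa using this.continuousWithinAt.tendsto (x := 0) (s := Ioi 0)
  exact ge_of_tendsto hlim (eventually_of_mem (Ioc_mem_nhdsGT one_pos) h)

lemma Finset.inf'_range_le_mul_add_div {k : ℕ} (hk : (Finset.range k).Nonempty)
    {b D f : ℕ → ℝ} {C ε : ℝ} (hC : 0 ≤ C) (hb : ∀ i < k, b i ≤ C * D i)
    (hD : ∀ i < k, D i ≤ ε + (f i - f (i + 1))) :
    (Finset.range k).inf' hk b ≤ C * (ε + (f 0 - f k) / k) := by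
  have hk0 : (0 : ℝ) < k := by exact_mod_cast Finset.nonempty_range_iff.mp hk |> Nat.pos_of_ne_zero
  have hcard : k * (Finset.range k).inf' hk b ≤ ∑ i ∈ Finset.range k, b i := by
    simpa using Finset.card_nsmul_le_sum _ b _ fun i hi => (Finset.range k).inf'_le b hi
  have hsum : ∑ i ∈ Finset.range k, b i ≤ C * (k * ε + (f 0 - f k)) :=
    calc ∑ i ∈ Finset.range k, b i
        ≤ ∑ i ∈ Finset.range k, C * (ε + (f i - f (i + 1))) :=
          Finset.sum_le_sum fun i hi => (hb i (Finset.mem_range.mp hi)).trans <|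
            mul_le_mul_of_nonneg_left (hD i (Finset.mem_range.mp hi)) hC
      _ = C * (k * ε + (f 0 - f k)) := by
          rw [← Finset.mul_sum, Finset.sum_add_distrib, Finset.sum_range_sub', Finset.sum_const,
            Finset.card_range, nsmul_eq_mul]
  refine le_of_mul_le_mul_left ?_ hk0
  calc k * (Finset.range k).inf' hk b ≤ C * (k * ε + (f 0 - f k)) := hcard.trans hsum
    _ = k * (C * (ε + (f 0 - f k) / k)) := by field_simp

lemma exists_mem_Icc_mul_kappa_div_le {c Δ : ℝ} (hc : 0 < c) (hΔ : 0 ≤ Δ) :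
    ∃ θ ∈ Icc (0 : ℝ) 1, c * kappa (Δ / c) ≤ θ * Δ - c / 2 * θ ^ 2 := by
  by_cases hΔc : Δ ≤ c
  · have hθ1 : Δ / c ≤ 1 := (div_le_one hc).mpr hΔc
    refine ⟨Δ / c, ⟨div_nonneg hΔ hc.le, hθ1⟩, le_of_eq ?_⟩
    rw [kappa, if_pos hθ1]
    field_simp
    ring
  · have hθ1 : ¬ Δ / c ≤ 1 := by rwa [div_le_one hc]
    refine ⟨1, ⟨zero_le_one, le_rfl⟩, le_of_eq ?_⟩
    rw [kappa, if_neg hθ1]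
    field_simp

lemma convexOn_univ_norm_add_apply_sub {E G : Type*} [NormedAddCommGroup E] [NormedSpace ℝ E]
    [NormedAddCommGroup G] [NormedSpace ℝ G] (v : G) (T : E →L[ℝ] G) (x : E) :
    ConvexOn ℝ univ fun y => ‖v + T (y - x)‖ := by
  have h := ((convexOn_norm convex_univ).translate_right (v - T x)).comp_linearMap
    (T : E →ₗ[ℝ] G)
  rw [preimage_univ, preimage_univ] at h
  convert h using 2 with y
  simp only [Function.comp_apply, map_sub, ContinuousLinearMap.coe_coe]
  abel_nf

section ProximalValue

variable {E : Type*} [NormedAddCommGroup E] {g : E → ℝ} {x : E} {a : ℝ}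

lemma bddBelow_range_add_mul_sq_norm_sub (hg : ∀ y, 0 ≤ g y) (ha : 0 ≤ a) :
    BddBelow (range fun y => g y + a * ‖y - x‖ ^ 2) :=
  ⟨0, by
    rintro _ ⟨y, rfl⟩
    exact add_nonneg (hg y) (by positivity)⟩

lemma iInf_add_mul_sq_norm_sub_le_self (hg : ∀ y, 0 ≤ g y) (ha : 0 ≤ a) :
    ⨅ y, g y + a * ‖y - x‖ ^ 2 ≤ g x := by
  simpa using ciInf_le (bddBelow_range_add_mul_sq_norm_sub (x := x) hg ha) x

lemma iInf_add_mul_sq_norm_sub_mono (hg : ∀ y, 0 ≤ g y) (ha : 0 ≤ a) {b : ℝ} (hab : a ≤ b) :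
    ⨅ y, g y + a * ‖y - x‖ ^ 2 ≤ ⨅ y, g y + b * ‖y - x‖ ^ 2 :=
  ciInf_mono (bddBelow_range_add_mul_sq_norm_sub hg ha) fun y => by gcongr

variable [NormedSpace ℝ E]

lemma norm_add_smul_sub_sub_self (x y : E) {t : ℝ} (ht : 0 ≤ t) :
    ‖x + t • (y - x) - x‖ = t * ‖y - x‖ := by
  rw [add_sub_cancel_left, norm_smul, Real.norm_of_nonneg ht]

lemma ConvexOn.apply_add_smul_sub_le (hg : ConvexOn ℝ univ g) (x y : E) {t : ℝ}
    (ht : t ∈ Icc (0 : ℝ) 1) : g (x + t • (y - x)) ≤ (1 - t) * g x + t * g y := by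
  have h := hg.2 (mem_univ x) (mem_univ y) (sub_nonneg.mpr ht.2) ht.1 (sub_add_cancel 1 t)
  rwa [show (1 - t) • x + t • y = x + t • (y - x) by module, smul_eq_mul, smul_eq_mul] at h

/-- Test the minimality of `s` along the segment towards `x` and let the step tend to `0`. -/
lemma ConvexOn.add_mul_sq_norm_sub_le_of_forall_le (hg : ConvexOn ℝ univ g) {s : E} {M : ℝ}
    (hs : ∀ y, g s + M / 2 * ‖s - x‖ ^ 2 ≤ g y + M / 2 * ‖y - x‖ ^ 2) :
    g s + M * ‖s - x‖ ^ 2 ≤ g x := by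
  set d := ‖s - x‖
  refine le_of_forall_mem_Ioc_le_add_mul (b := M / 2 * d ^ 2) fun t ht => ?_
  have hconv := hg.apply_add_smul_sub_le s x ⟨ht.1.le, ht.2⟩
  have hmin := hs (s + t • (x - s))
  have hdist : ‖s + t • (x - s) - x‖ = (1 - t) * d := by
    rw [show s + t • (x - s) - x = (1 - t) • (s - x) by module, norm_smul,
      Real.norm_of_nonneg (sub_nonneg.mpr ht.2)]
  rw [hdist] at hmin
  have : t * (g s + M * d ^ 2) ≤ t * (g x + t * (M / 2 * d ^ 2)) := by nlinarith
  exact le_of_mul_le_mul_left this ht.1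

lemma ConvexOn.iInf_add_mul_sq_norm_sub_le (hg : ConvexOn ℝ univ g) (hg0 : ∀ y, 0 ≤ g y)
    (ha : 0 ≤ a) {r θ : ℝ} (hr : 0 ≤ r) (hθ : θ ∈ Icc (0 : ℝ) 1) :
    ⨅ y, g y + a * ‖y - x‖ ^ 2
      ≤ g x - θ * (g x - sInf (g '' Metric.closedBall x r)) + a * r ^ 2 * θ ^ 2 := by
  have : Nonempty (Metric.closedBall x r) := ⟨⟨x, Metric.mem_closedBall_self hr⟩⟩
  have hpoint : ∀ y ∈ Metric.closedBall x r,
      ⨅ y, g y + a * ‖y - x‖ ^ 2 ≤ (1 - θ) * g x + θ * g y + a * r ^ 2 * θ ^ 2 := by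
    intro y hy
    have hyr : ‖y - x‖ ≤ r := by rwa [← dist_eq_norm, ← Metric.mem_closedBall]
    calc ⨅ y, g y + a * ‖y - x‖ ^ 2
        ≤ g (x + θ • (y - x)) + a * ‖x + θ • (y - x) - x‖ ^ 2 :=
          ciInf_le (bddBelow_range_add_mul_sq_norm_sub hg0 ha) _
      _ ≤ (1 - θ) * g x + θ * g y + a * r ^ 2 * θ ^ 2 := by
          rw [norm_add_smul_sub_sub_self x y hθ.1]
          refine add_le_add (hg.apply_add_smul_sub_le x y hθ) ?_
          rw [mul_assoc, mul_pow, mul_comm (θ ^ 2)]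
          gcongr
  have hinf : (⨅ y, g y + a * ‖y - x‖ ^ 2) - (1 - θ) * g x - a * r ^ 2 * θ ^ 2
      ≤ θ * sInf (g '' Metric.closedBall x r) := by
    rw [sInf_image', Real.mul_iInf_of_nonneg hθ.1]
    exact le_ciInf fun y => by linarith [hpoint y y.2]
  linarith

lemma ConvexOn.mul_kappa_le_sub_iInf (hg : ConvexOn ℝ univ g) (hg0 : ∀ y, 0 ≤ g y)
    (ha : 0 < a) {r : ℝ} (hr : 0 < r) :
    2 * a * r ^ 2 * kappa ((g x - sInf (g '' Metric.closedBall x r)) / (2 * a * r ^ 2))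
      ≤ g x - ⨅ y, g y + a * ‖y - x‖ ^ 2 := by
  have hΔ : sInf (g '' Metric.closedBall x r) ≤ g x :=
    csInf_le ⟨0, by rintro _ ⟨y, -, rfl⟩; exact hg0 y⟩
      (mem_image_of_mem g (Metric.mem_closedBall_self hr.le))
  obtain ⟨θ, hθ, hκ⟩ := exists_mem_Icc_mul_kappa_div_le (by positivity : 0 < 2 * a * r ^ 2)
    (sub_nonneg.mpr hΔ)
  have := hg.iInf_add_mul_sq_norm_sub_le (x := x) hg0 ha.le hr.le hθ
  linarith

lemma ConvexOn.sq_norm_smul_sub_le_of_forall_le (hg : ConvexOn ℝ univ g)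
    (hg0 : ∀ y, 0 ≤ g y) (ha : 0 ≤ a) {s : E}
    (hs : ∀ y, g s + 2 * a / 2 * ‖s - x‖ ^ 2 ≤ g y + 2 * a / 2 * ‖y - x‖ ^ 2) :
    ‖(2 * a) • (s - x)‖ ^ 2 ≤ 4 * a * (g x - ⨅ y, g y + a * ‖y - x‖ ^ 2) := by
  have hdesc := hg.add_mul_sq_norm_sub_le_of_forall_le hs
  have hinf : ⨅ y, g y + a * ‖y - x‖ ^ 2 ≤ g s + a * ‖s - x‖ ^ 2 :=
    ciInf_le (bddBelow_range_add_mul_sq_norm_sub hg0 ha) s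
  rw [norm_smul, Real.norm_of_nonneg (by positivity)]
  nlinarith

end ProximalValue

theorem global_sublinear_convergence_adaptive_tau_general
    {n m : ℕ}
    (F : EuclideanSpace ℝ (Fin n) → EuclideanSpace ℝ (Fin m))
    (F' : EuclideanSpace ℝ (Fin n) →
      EuclideanSpace ℝ (Fin n) →L[ℝ] EuclideanSpace ℝ (Fin m))
    (LF : ℝ) (hLF : 0 < LF)
    (S : ℝ → EuclideanSpace ℝ (Fin n) → EuclideanSpace ℝ (Fin n))
    (hS : ∀ (L : ℝ) (x : EuclideanSpace ℝ (Fin n)), 0 < L → ∀ y,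
      ‖F x + F' x (S L x - x)‖ + L / 2 * ‖S L x - x‖ ^ 2
        ≤ ‖F x + F' x (y - x)‖ + L / 2 * ‖y - x‖ ^ 2)
    (L ε : ℝ) (hL0 : 0 < L) (hLLF : L ≤ LF)
    (k : ℕ) (hk : 1 ≤ k) (r : ℝ) (hr : 0 < r)
    (x : ℕ → EuclideanSpace ℝ (Fin n)) (Lk τs : ℕ → ℝ)
    (hLk : ∀ i < k, L ≤ Lk i ∧ Lk i ≤ 2 * LF)
    (hstep : ∀ i < k, psi F F' (x i) (Lk i) (τs i) (x (i + 1))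
        ≤ ε + sInf (Set.range fun y =>
            ‖F (x i) + F' (x i) (y - x i)‖ + Lk i / 2 * ‖y - x i‖ ^ 2))
    (hub : ∀ i < k, ‖F (x (i + 1))‖ ≤ psi F F' (x i) (Lk i) (τs i) (x (i + 1))) :
    (Finset.range k).inf' (Finset.nonempty_range_iff.mpr (Nat.one_le_iff_ne_zero.mp hk))
        (fun i => ‖(2 * LF) • (S (2 * LF) (x i) - x i)‖ ^ 2)
      ≤ 8 * LF ^ 2 / L * (ε + (‖F (x 0)‖ - ‖F (x k)‖) / (k : ℝ))
    ∧ (Finset.range k).inf' (Finset.nonempty_range_iff.mpr (Nat.one_le_iff_ne_zero.mp hk))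
        (fun i => 2 * (LF * r) ^ 2 * kappa (DeltaTilde F F' r (x i) / (2 * LF * r ^ 2)))
      ≤ LF * (ε + (‖F (x 0)‖ - ‖F (x k)‖) / (k : ℝ)) := by
  have hconv i := convexOn_univ_norm_add_apply_sub (F (x i)) (F' (x i)) (x i)
  have hnonneg i y : 0 ≤ ‖F (x i) + F' (x i) (y - x i)‖ := norm_nonneg _
  have hcenter i : ‖F (x i) + F' (x i) (x i - x i)‖ = ‖F (x i)‖ := by simp
  have hgap i : 0 ≤ ‖F (x i)‖ - ⨅ y, ‖F (x i) + F' (x i) (y - x i)‖ + LF * ‖y - x i‖ ^ 2 := by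
    have := iInf_add_mul_sq_norm_sub_le_self (x := x i) (hnonneg i) hLF.le
    rw [hcenter] at this
    exact sub_nonneg.mpr this
  have hdesc : ∀ i < k, ‖F (x i)‖ - (⨅ y, ‖F (x i) + F' (x i) (y - x i)‖ + LF * ‖y - x i‖ ^ 2)
      ≤ ε + (‖F (x i)‖ - ‖F (x (i + 1))‖) := fun i hi => by
    have := iInf_add_mul_sq_norm_sub_mono (x := x i) (hnonneg i)
      (by linarith [(hLk i hi).1] : 0 ≤ Lk i / 2) (by linarith [(hLk i hi).2] : Lk i / 2 ≤ LF)
    have hmodel := hstep i hi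
    rw [sInf_range] at hmodel
    linarith [hub i hi]
  constructor
  · refine Finset.inf'_range_le_mul_add_div _ (by positivity) (fun i _ => ?_) hdesc
    have hprox := (hconv i).sq_norm_smul_sub_le_of_forall_le (hnonneg i) hLF.le
      (hS (2 * LF) (x i) (by positivity))
    rw [hcenter] at hprox
    have hcoef : 4 * LF ≤ 8 * LF ^ 2 / L := by
      rw [le_div_iff₀ hL0]
      nlinarith
    exact hprox.trans (mul_le_mul_of_nonneg_right hcoef (hgap i))
  · refine Finset.inf'_range_le_mul_add_div _ hLF.le (fun i _ => ?_) hdesc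
    have hκ := (hconv i).mul_kappa_le_sub_iInf (x := x i) (hnonneg i) hLF hr
    rw [hcenter] at hκ
    calc 2 * (LF * r) ^ 2 * kappa (DeltaTilde F F' r (x i) / (2 * LF * r ^ 2))
        = LF * (2 * LF * r ^ 2 * kappa (DeltaTilde F F' r (x i) / (2 * LF * r ^ 2))) := by ring
      _ ≤ _ := mul_le_mul_of_nonneg_left hκ hLF.le

/-- **Theorem 8.** Global sublinear convergence with adaptively chosen `τ`.
`S L x` is characterized as the minimizer over `y` of `φ(x,y) + (L/2)‖y − x‖²`. -/
theorem global_sublinear_convergence_adaptive_tau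
    {n m : ℕ}
    (F : EuclideanSpace ℝ (Fin n) → EuclideanSpace ℝ (Fin m))
    (F' : EuclideanSpace ℝ (Fin n) →
      EuclideanSpace ℝ (Fin n) →L[ℝ] EuclideanSpace ℝ (Fin m))
    (hF : ∀ x, HasFDerivAt F (F' x) x)
    (LF : ℝ) (hLF : 0 < LF)
    (hLip : ∀ x y, ‖F' y - F' x‖ ≤ LF * ‖y - x‖)
    (S : ℝ → EuclideanSpace ℝ (Fin n) → EuclideanSpace ℝ (Fin n))
    (hS : ∀ (L : ℝ) (x : EuclideanSpace ℝ (Fin n)), 0 < L → ∀ y,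
      ‖F x + F' x (S L x - x)‖ + L / 2 * ‖S L x - x‖ ^ 2
        ≤ ‖F x + F' x (y - x)‖ + L / 2 * ‖y - x‖ ^ 2)
    (L ε : ℝ) (hL0 : 0 < L) (hLLF : L ≤ LF) (hε : 0 ≤ ε)
    (k : ℕ) (hk : 1 ≤ k) (r : ℝ) (hr : 0 < r)
    (x : ℕ → EuclideanSpace ℝ (Fin n)) (Lk τs : ℕ → ℝ)
    (hτs : ∀ i < k, 0 < τs i)
    (hLk : ∀ i < k, L ≤ Lk i ∧ Lk i ≤ 2 * LF)
    (hstep : ∀ i < k, psi F F' (x i) (Lk i) (τs i) (x (i + 1))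
        ≤ ε + sInf (Set.range fun y =>
            ‖F (x i) + F' (x i) (y - x i)‖ + Lk i / 2 * ‖y - x i‖ ^ 2))
    (hmono : ∀ i < k, psi F F' (x i) (Lk i) (τs i) (x (i + 1)) ≤ ‖F (x i)‖)
    (hub : ∀ i < k, ‖F (x (i + 1))‖ ≤ psi F F' (x i) (Lk i) (τs i) (x (i + 1))) :
    (Finset.range k).inf' (Finset.nonempty_range_iff.mpr (Nat.one_le_iff_ne_zero.mp hk))
        (fun i => ‖(2 * LF) • (S (2 * LF) (x i) - x i)‖ ^ 2)
      ≤ 8 * LF ^ 2 / L * (ε + (‖F (x 0)‖ - ‖F (x k)‖) / (k : ℝ))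
    ∧ (Finset.range k).inf' (Finset.nonempty_range_iff.mpr (Nat.one_le_iff_ne_zero.mp hk))
        (fun i => 2 * (LF * r) ^ 2 * kappa (DeltaTilde F F' r (x i) / (2 * LF * r ^ 2)))
      ≤ LF * (ε + (‖F (x 0)‖ - ‖F (x k)‖) / (k : ℝ)) :=
  global_sublinear_convergence_adaptive_tau_general F F' LF hLF S hS L ε hL0 hLLF k hk r hr x Lk τs
    hLk hstep hub
end

section
/- Let x ∈ E₁, ε ≥ 0, 0 < L ≤ 2L_F, τ* > 0, and let x⁺ ∈ E₁ satisfy ψ_{x,L,τ*}(x⁺) ≤ ε + inf_{y ∈ E₁}( φ(x,y) + (L/2)·‖y − x‖² ) and f₁(x⁺) ≤ ψ_{x,L,τ*}(x⁺). Then: if f₁(x) ≤ μ/(2L_F), f₁(x⁺) ≤ ε + (L_F/μ)·f₂(x) ≤ ε + f₁(x)/2; otherwise f₁(x⁺) ≤ ε + f₁(x) − μ/(4L_F). If moreover L = L_F, then: if f₁(x) ≤ μ/L_F, f₁(x⁺) ≤ ε + (L_F/(2μ))·f₂(x) ≤ ε + f₁(x)/2; otherwise f₁(x⁺) ≤ ε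 + f₁(x) − μ/(2L_F). (Theorem 9: per-iteration decrease with adaptively chosen τ under the Polyak–Łojasiewicz condition.) -/
open ContinuousLinearMap

section LinearizedModel

variable {E G : Type*} [NormedAddCommGroup E] [InnerProductSpace ℝ E] [CompleteSpace E]
  [NormedAddCommGroup G] [InnerProductSpace ℝ G] [FiniteDimensional ℝ G]
  {A : E →L[ℝ] G} {μ : ℝ}

theorem exists_apply_eq_and_mul_norm_sq_le (hμ : 0 < μ)
    (hA : ∀ u, μ * ‖u‖ ^ 2 ≤ ‖adjoint A u‖ ^ 2) (v : G) :
    ∃ d, A d = v ∧ μ * ‖d‖ ^ 2 ≤ ‖v‖ ^ 2 := by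
  have hgram : ∀ u, ‖adjoint A u‖ ^ 2 = inner ℝ u (A (adjoint A u)) := fun u => by
    rw [← real_inner_self_eq_norm_sq, adjoint_inner_left]
  have hinj : Function.Injective (A ∘L adjoint A) := by
    refine (injective_iff_map_eq_zero _).2 fun u hu => ?_
    have hμu := hA u
    rw [hgram, show A (adjoint A u) = 0 from hu, inner_zero_right] at hμu
    exact norm_eq_zero.1 (pow_eq_zero_iff two_ne_zero |>.1 (by nlinarith [sq_nonneg ‖u‖]))
  obtain ⟨w, hw⟩ := LinearMap.injective_iff_surjective.1 hinj v
  replace hw : A (adjoint A w) = v := hw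
  refine ⟨adjoint A w, hw, ?_⟩
  have hAw : ‖adjoint A w‖ ^ 2 ≤ ‖w‖ * ‖v‖ := by
    rw [hgram, hw]
    exact real_inner_le_norm _ _
  have hw_le : μ * ‖w‖ ≤ ‖v‖ := by
    rcases (norm_nonneg w).eq_or_lt with hw0 | hw0
    · rw [← hw0, mul_zero]
      exact norm_nonneg v
    · nlinarith [hA w]
  calc μ * ‖adjoint A w‖ ^ 2 ≤ (μ * ‖w‖) * ‖v‖ := by nlinarith
    _ ≤ ‖v‖ ^ 2 := by nlinarith [norm_nonneg v]

theorem sInf_linearizedModel_le (hμ : 0 < μ) (hA : ∀ u, μ * ‖u‖ ^ 2 ≤ ‖adjoint A u‖ ^ 2)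
    (v : G) (x : E) {L : ℝ} (hL : 0 ≤ L) {t : ℝ} (ht : t ∈ Set.Icc (0 : ℝ) 1) :
    sInf (Set.range fun y => ‖v + A (y - x)‖ + L / 2 * ‖y - x‖ ^ 2)
      ≤ (1 - t) * ‖v‖ + L / 2 * (t ^ 2 * ‖v‖ ^ 2 / μ) := by
  obtain ⟨d, hd, hμd⟩ := exists_apply_eq_and_mul_norm_sq_le hμ hA v
  have hbdd : BddBelow (Set.range fun y => ‖v + A (y - x)‖ + L / 2 * ‖y - x‖ ^ 2) :=
    ⟨0, by rintro _ ⟨y, rfl⟩; positivity⟩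
  refine (csInf_le hbdd ⟨x - t • d, rfl⟩).trans ?_
  have hlin : v + A (x - t • d - x) = (1 - t) • v := by
    rw [sub_sub_cancel_left, map_neg, map_smul, hd]
    module
  have hstep : ‖x - t • d - x‖ ^ 2 ≤ t ^ 2 * ‖v‖ ^ 2 / μ := by
    rw [sub_sub_cancel_left, norm_neg, norm_smul, mul_pow, Real.norm_eq_abs, sq_abs,
      le_div_iff₀ hμ]
    nlinarith [sq_nonneg t]
  simp only [hlin, norm_smul, Real.norm_of_nonneg (sub_nonneg.2 ht.2)]
  gcongr

end LinearizedModel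

theorem le_of_forall_mem_Icc_le_one_sub_mul_add {P f μ L : ℝ} (hμ : 0 < μ) (hL : 0 < L)
    (h : ∀ t ∈ Set.Icc (0 : ℝ) 1, P ≤ (1 - t) * f + L / 2 * (t ^ 2 * f ^ 2 / μ)) :
    P ≤ L / (2 * μ) * f ^ 2 ∧ (μ ≤ L * f → P ≤ f - μ / (2 * L)) := by
  refine ⟨?_, fun hLf => ?_⟩
  · convert h 1 ⟨zero_le_one, le_rfl⟩ using 1
    ring
  · have hf0 : 0 < f := pos_of_mul_pos_right (hμ.trans_le hLf) hL.le
    convert h (μ / (L * f)) ⟨by positivity, (div_le_one (by positivity)).2 hLf⟩ using 1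
    field_simp
    ring

theorem div_mul_sq_le_half {f μ L : ℝ} (hμ : 0 < μ) (hf : 0 ≤ f) (hLf : L * f ≤ μ) :
    L / (2 * μ) * f ^ 2 ≤ f / 2 := by
  rw [div_mul_eq_mul_div, div_le_div_iff₀ (by positivity) two_pos]
  nlinarith

theorem per_iteration_decrease_adaptive_tau_PL_general
    {n m : ℕ}
    (F : EuclideanSpace ℝ (Fin n) → EuclideanSpace ℝ (Fin m))
    (F' : EuclideanSpace ℝ (Fin n) →
      EuclideanSpace ℝ (Fin n) →L[ℝ] EuclideanSpace ℝ (Fin m))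
    (LF : ℝ) (hLF : 0 < LF)
    (μ : ℝ) (hμ : 0 < μ)
    (hPL : ∀ (x : EuclideanSpace ℝ (Fin n)) (u : EuclideanSpace ℝ (Fin m)),
      μ * ‖u‖ ^ 2 ≤ ‖(ContinuousLinearMap.adjoint (F' x)) u‖ ^ 2)
    (x : EuclideanSpace ℝ (Fin n))
    (ε : ℝ)
    (L : ℝ) (hL0 : 0 < L) (hL : L ≤ 2 * LF)
    (τs : ℝ)
    (xp : EuclideanSpace ℝ (Fin n))
    (hxp : psi F F' x L τs xp
        ≤ ε + sInf (Set.range fun y => ‖F x + F' x (y - x)‖ + L / 2 * ‖y - x‖ ^ 2))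
    (hub : ‖F xp‖ ≤ psi F F' x L τs xp) :
    ((‖F x‖ ≤ μ / (2 * LF) →
        ‖F xp‖ ≤ ε + LF / μ * ‖F x‖ ^ 2 ∧ ε + LF / μ * ‖F x‖ ^ 2 ≤ ε + ‖F x‖ / 2) ∧
      (μ / (2 * LF) < ‖F x‖ → ‖F xp‖ ≤ ε + ‖F x‖ - μ / (4 * LF))) ∧
    (L = LF →
      (‖F x‖ ≤ μ / LF →
        ‖F xp‖ ≤ ε + LF / (2 * μ) * ‖F x‖ ^ 2 ∧
          ε + LF / (2 * μ) * ‖F x‖ ^ 2 ≤ ε + ‖F x‖ / 2) ∧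
      (μ / LF < ‖F x‖ → ‖F xp‖ ≤ ε + ‖F x‖ - μ / (2 * LF))) := by
  set f := ‖F x‖
  have hf : 0 ≤ f := norm_nonneg _
  obtain ⟨hfull, hdamped⟩ :=
    le_of_forall_mem_Icc_le_one_sub_mul_add (P := ‖F xp‖ - ε) (f := f) hμ hL0
    fun t ht => by linarith [sInf_linearizedModel_le hμ (hPL x) (F x) x hL0.le ht]
  refine ⟨⟨fun hsmall => ?_, fun hbig => ?_⟩, fun hLF_eq => ⟨fun hsmall => ?_, fun hbig => ?_⟩⟩
  · have hLF_div : 2 * LF / (2 * μ) = LF / μ := mul_div_mul_left _ _ two_ne_zero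
    have hL_le : L / (2 * μ) * f ^ 2 ≤ 2 * LF / (2 * μ) * f ^ 2 := by gcongr
    have hhalf := div_mul_sq_le_half hμ hf ((le_div_iff₀' (by positivity)).1 hsmall)
    rw [hLF_div] at hL_le hhalf
    constructor <;> linarith
  · rcases le_or_gt μ (L * f) with hLf | hLf
    · have : μ / (4 * LF) ≤ μ / (2 * L) :=
        div_le_div_of_nonneg_left hμ.le (by positivity) (by linarith)
      linarith [hdamped hLf]
    · have : μ / (4 * LF) = μ / (2 * LF) / 2 := by field_simp; ring
      linarith [div_mul_sq_le_half hμ hf hLf.le]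
  · subst hLF_eq
    have := div_mul_sq_le_half hμ hf ((le_div_iff₀' hL0).1 hsmall)
    constructor <;> linarith
  · subst hLF_eq
    linarith [hdamped ((div_lt_iff₀' hL0).1 hbig).le]

/-- **Theorem 9.** Per-iteration decrease with adaptively chosen `τ` under the
Polyak–Łojasiewicz condition. -/
theorem per_iteration_decrease_adaptive_tau_PL
    {n m : ℕ}
    (F : EuclideanSpace ℝ (Fin n) → EuclideanSpace ℝ (Fin m))
    (F' : EuclideanSpace ℝ (Fin n) →
      EuclideanSpace ℝ (Fin n) →L[ℝ] EuclideanSpace ℝ (Fin m))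
    (hF : ∀ x, HasFDerivAt F (F' x) x)
    (LF : ℝ) (hLF : 0 < LF)
    (hLip : ∀ x y, ‖F' y - F' x‖ ≤ LF * ‖y - x‖)
    (μ : ℝ) (hμ : 0 < μ)
    (hPL : ∀ (x : EuclideanSpace ℝ (Fin n)) (u : EuclideanSpace ℝ (Fin m)),
      μ * ‖u‖ ^ 2 ≤ ‖(ContinuousLinearMap.adjoint (F' x)) u‖ ^ 2)
    (x : EuclideanSpace ℝ (Fin n))
    (ε : ℝ) (hε : 0 ≤ ε)
    (L : ℝ) (hL0 : 0 < L) (hL : L ≤ 2 * LF)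
    (τs : ℝ) (hτs : 0 < τs)
    (xp : EuclideanSpace ℝ (Fin n))
    (hxp : psi F F' x L τs xp
        ≤ ε + sInf (Set.range fun y => ‖F x + F' x (y - x)‖ + L / 2 * ‖y - x‖ ^ 2))
    (hub : ‖F xp‖ ≤ psi F F' x L τs xp) :
    ((‖F x‖ ≤ μ / (2 * LF) →
        ‖F xp‖ ≤ ε + LF / μ * ‖F x‖ ^ 2 ∧ ε + LF / μ * ‖F x‖ ^ 2 ≤ ε + ‖F x‖ / 2) ∧
      (μ / (2 * LF) < ‖F x‖ → ‖F xp‖ ≤ ε + ‖F x‖ - μ / (4 * LF))) ∧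
    (L = LF →
      (‖F x‖ ≤ μ / LF →
        ‖F xp‖ ≤ ε + LF / (2 * μ) * ‖F x‖ ^ 2 ∧
          ε + LF / (2 * μ) * ‖F x‖ ^ 2 ≤ ε + ‖F x‖ / 2) ∧
      (μ / LF < ‖F x‖ → ‖F xp‖ ≤ ε + ‖F x‖ - μ / (2 * LF))) :=
  per_iteration_decrease_adaptive_tau_PL_general F F' LF hLF μ hμ hPL x ε L hL0 hL τs xp hxp hub
end
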